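/- arXiv:1810.06924 — 9 statements merged into one kernel-verified Lean document; each statement's English description precedes it below -/
import Mathlib

section
/- Every atom of a fair measure belongs to a totally invariant periodic orbit, i.e., a periodic orbit P of f with f⁻¹(P) = P. -/
open MeasureTheory Set Function
open scoped ENNReal

/-!
Invariance gives `μ (f⁻¹' S) = μ S`, so if `f` maps a countable set `S` into itself, the points of
`f⁻¹' S \ S` carry no mass. For `S` the forward orbit of `f x` this forces an atom `x` back onto
that orbit, so `x` is periodic. For `S` the orbit `P` of `x` it shows that `f⁻¹' P \ P` has no
atoms; but fairness splits the mass of an atom `y` equally among its preimages, one per branch,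
and there are only finitely many of them since they carry all of `μ {y}`. So every preimage of
an atom is an atom, and since mass does not decrease along orbits, `f⁻¹' P = P`.
-/

theorem mapsTo_range_iterate {X : Type*} (f : X → X) (x : X) :
    MapsTo f (range fun k ↦ f^[k] x) (range fun k ↦ f^[k] x) := by
  rintro _ ⟨k, rfl⟩
  exact ⟨k + 1, iterate_succ_apply' f k x⟩

section Invariant

variable {X : Type*} [MeasurableSpace X] {f : X → X} {μ : Measure X}

theorem measure_preimage_sdiff_eq_zero
    (hinv : ∀ A : Set X, MeasurableSet A → μ (f ⁻¹' A) = μ A)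
    {S : Set X} (hS : MeasurableSet S) (hSf : MapsTo f S S) (hμS : μ S ≠ ∞) :
    μ (f ⁻¹' S \ S) = 0 := by
  have h := measure_add_sdiff (μ := μ) hS.nullMeasurableSet (f ⁻¹' S)
  rw [union_eq_right.2 hSf.subset_preimage, hinv S hS] at h
  exact (ENNReal.add_right_inj hμS).1 (h.trans (add_zero _).symm)

variable [MeasurableSingletonClass X]

theorem measure_singleton_le_apply
    (hinv : ∀ A : Set X, MeasurableSet A → μ (f ⁻¹' A) = μ A) (z : X) :
    μ {z} ≤ μ {f z} :=
  calc μ {z} ≤ μ (f ⁻¹' {f z}) := measure_mono (singleton_subset_iff.2 rfl)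
    _ = μ {f z} := hinv _ (measurableSet_singleton _)

theorem monotone_measure_singleton_iterate
    (hinv : ∀ A : Set X, MeasurableSet A → μ (f ⁻¹' A) = μ A) (x : X) :
    Monotone fun k ↦ μ {f^[k] x} :=
  monotone_nat_of_le_succ fun k ↦ by
    simpa only [iterate_succ_apply'] using measure_singleton_le_apply hinv (f^[k] x)

theorem measure_singleton_eq_zero_of_mem_preimage_range_iterate [IsFiniteMeasure μ]
    (hinv : ∀ A : Set X, MeasurableSet A → μ (f ⁻¹' A) = μ A)
    {x z : X} (hz : z ∈ f ⁻¹' (range fun k ↦ f^[k] x)) (hzx : z ∉ range fun k ↦ f^[k] x) :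
    μ {z} = 0 :=
  measure_mono_null (singleton_subset_iff.2 (mem_sdiff z |>.2 ⟨hz, hzx⟩)) <|
    measure_preimage_sdiff_eq_zero hinv (countable_range _).measurableSet
      (mapsTo_range_iterate f x) (measure_ne_top μ _)

theorem exists_isPeriodicPt_of_measure_singleton_ne_zero [IsFiniteMeasure μ]
    (hinv : ∀ A : Set X, MeasurableSet A → μ (f ⁻¹' A) = μ A)
    {x : X} (hx : μ {x} ≠ 0) :
    ∃ p, 0 < p ∧ IsPeriodicPt f p x := by
  have hfx : f x ∈ range fun k ↦ f^[k] (f x) := ⟨0, rfl⟩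
  by_cases hxO : x ∈ range fun k ↦ f^[k] (f x)
  · obtain ⟨k, hk⟩ := hxO
    exact ⟨k + 1, k.succ_pos, hk⟩
  · exact absurd (measure_singleton_eq_zero_of_mem_preimage_range_iterate hinv hfx hxO) hx

theorem preimage_range_iterate_eq_of_measure_singleton_ne_zero [IsFiniteMeasure μ]
    (hinv : ∀ A : Set X, MeasurableSet A → μ (f ⁻¹' A) = μ A)
    (hatom : ∀ z, μ {f z} ≠ 0 → μ {z} ≠ 0) {x : X} (hx : μ {x} ≠ 0) :
    f ⁻¹' (range fun k ↦ f^[k] x) = range fun k ↦ f^[k] x := by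
  refine Subset.antisymm (fun z hz ↦ ?_) (mapsTo_range_iterate f x)
  by_contra hzO
  obtain ⟨k, hk⟩ := hz
  have hfz : μ {f z} ≠ 0 := by
    rw [← hk]
    exact ne_bot_of_le_ne_bot hx (monotone_measure_singleton_iterate hinv x k.zero_le)
  exact hatom z hfz (measure_singleton_eq_zero_of_mem_preimage_range_iterate hinv ⟨k, hk⟩ hzO)

end Invariant

section Fair

variable {X : Type*} [MeasurableSpace X] {f : X → X} {Xp : ℕ → Set X} {μ : Measure X}

def FairOnBranches (f : X → X) (Xp : ℕ → Set X) (μ : Measure X) : Prop :=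
  ∀ B : Set X, MeasurableSet B →
    (∀ i, B ⊆ f '' Xp i ∨ B ∩ f '' Xp i = ∅) →
    ∀ i, B ⊆ f '' Xp i →
      μ (Xp i ∩ f ⁻¹' B) = μ B / ({j | B ⊆ f '' Xp j}.encard : ℝ≥0∞)

variable [MeasurableSingletonClass X]

theorem FairOnBranches.measure_inter_preimage_singleton (hfair : FairOnBranches f Xp μ)
    {i : ℕ} {y : X} (hy : y ∈ f '' Xp i) :
    μ (Xp i ∩ f ⁻¹' {y}) = μ {y} / ({j | y ∈ f '' Xp j}.encard : ℝ≥0∞) := by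
  have hdich : ∀ j, {y} ⊆ f '' Xp j ∨ {y} ∩ f '' Xp j = ∅ := fun j ↦
    (em (y ∈ f '' Xp j)).imp singleton_subset_iff.2 singleton_inter_eq_empty.2
  simpa only [singleton_subset_iff] using
    hfair {y} (measurableSet_singleton y) hdich i (singleton_subset_iff.2 hy)

theorem FairOnBranches.measure_inter_preimage_singleton_le (hfair : FairOnBranches f Xp μ)
    (i : ℕ) (y : X) :
    μ (Xp i ∩ f ⁻¹' {y}) ≤ μ {y} / ({j | y ∈ f '' Xp j}.encard : ℝ≥0∞) := by
  by_cases hy : y ∈ f '' Xp i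
  · exact (hfair.measure_inter_preimage_singleton hy).le
  · have hempty : Xp i ∩ f ⁻¹' {y} ⊆ ∅ := fun z hz ↦ hy ⟨z, hz.1, hz.2⟩
    simp [measure_mono_null hempty measure_empty]

theorem FairOnBranches.encard_ne_top (hfair : FairOnBranches f Xp μ)
    (hcover : (⋃ i, Xp i) = univ)
    (hinv : ∀ A : Set X, MeasurableSet A → μ (f ⁻¹' A) = μ A)
    {y : X} (hy : μ {y} ≠ 0) :
    ({j | y ∈ f '' Xp j}.encard : ℝ≥0∞) ≠ ∞ := by
  intro htop
  refine hy ?_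
  rw [← hinv _ (measurableSet_singleton y), ← univ_inter (f ⁻¹' {y}), ← hcover, iUnion_inter]
  refine measure_iUnion_null fun i ↦ nonpos_iff_eq_zero.1 ?_
  simpa only [htop, ENNReal.div_top] using hfair.measure_inter_preimage_singleton_le i y

theorem FairOnBranches.measure_singleton_ne_zero_of_apply (hfair : FairOnBranches f Xp μ)
    (hcover : (⋃ i, Xp i) = univ) (hinj : ∀ i, InjOn f (Xp i))
    (hinv : ∀ A : Set X, MeasurableSet A → μ (f ⁻¹' A) = μ A)
    {z : X} (hz : μ {f z} ≠ 0) :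
    μ {z} ≠ 0 := by
  obtain ⟨i, hzi⟩ := mem_iUnion.1 (hcover ▸ mem_univ z)
  have hbranch : Xp i ∩ f ⁻¹' {f z} = {z} :=
    Subset.antisymm (fun w hw ↦ hinj i hw.1 hzi hw.2) (singleton_subset_iff.2 ⟨hzi, rfl⟩)
  rw [← hbranch, hfair.measure_inter_preimage_singleton ⟨z, hzi, rfl⟩]
  exact (ENNReal.div_pos hz (hfair.encard_ne_top hcover hinv hz)).ne'

end Fair

theorem fair_measure_atoms_totally_invariant_periodic_general
    {X : Type*} [MeasurableSpace X] [TopologicalSpace X] [PolishSpace X] [BorelSpace X]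
    (f : X → X)
    (Xp : ℕ → Set X)
    (hcover : (⋃ i, Xp i) = Set.univ)
    (hinj : ∀ i, Set.InjOn f (Xp i))
    (μ : Measure X) [IsProbabilityMeasure μ]
    (hinv : ∀ A : Set X, MeasurableSet A → μ (f ⁻¹' A) = μ A)
    (hfair : ∀ B : Set X, MeasurableSet B →
      (∀ i, B ⊆ f '' Xp i ∨ B ∩ f '' Xp i = ∅) →
      ∀ i, B ⊆ f '' Xp i →
        μ (Xp i ∩ f ⁻¹' B) = μ B / ({j | B ⊆ f '' Xp j}.encard : ℝ≥0∞))
    (x : X) (hx : 0 < μ {x}) :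
    ∃ p : ℕ, 0 < p ∧ f^[p] x = x ∧
      f ⁻¹' {y : X | ∃ k : ℕ, f^[k] x = y} = {y : X | ∃ k : ℕ, f^[k] x = y} := by
  have hatom : ∀ z, μ {f z} ≠ 0 → μ {z} ≠ 0 := fun _ ↦
    FairOnBranches.measure_singleton_ne_zero_of_apply hfair hcover hinj hinv
  obtain ⟨p, hp, hpx⟩ := exists_isPeriodicPt_of_measure_singleton_ne_zero hinv hx.ne'
  exact ⟨p, hp, hpx, preimage_range_iterate_eq_of_measure_singleton_ne_zero hinv hatom hx.ne'⟩

/-- Every atom of a fair measure belongs to a totally invariant periodic orbit,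
i.e. a periodic orbit `P` of `f` with `f⁻¹(P) = P`. -/
theorem fair_measure_atoms_totally_invariant_periodic
    {X : Type*} [MeasurableSpace X] [TopologicalSpace X] [PolishSpace X] [BorelSpace X]
    (f : X → X) (hf : Function.Surjective f) (hfm : Measurable f)
    (Xp : ℕ → Set X)
    (hXpm : ∀ i, MeasurableSet (Xp i))
    (hcover : (⋃ i, Xp i) = Set.univ)
    (hdisj : Pairwise (Function.onFun Disjoint Xp))
    (himg : ∀ i, MeasurableSet (f '' Xp i))
    (hinj : ∀ i, Set.InjOn f (Xp i))
    (hbi : ∀ i, ∀ A : Set X, A ⊆ Xp i → MeasurableSet A → MeasurableSet (f '' A))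
    (μ : Measure X) [IsProbabilityMeasure μ]
    (hinv : ∀ A : Set X, MeasurableSet A → μ (f ⁻¹' A) = μ A)
    (hfair : ∀ B : Set X, MeasurableSet B →
      (∀ i, B ⊆ f '' Xp i ∨ B ∩ f '' Xp i = ∅) →
      ∀ i, B ⊆ f '' Xp i →
        μ (Xp i ∩ f ⁻¹' B) = μ B / ({j | B ⊆ f '' Xp j}.encard : ℝ≥0∞))
    (x : X) (hx : 0 < μ {x}) :
    ∃ p : ℕ, 0 < p ∧ f^[p] x = x ∧
      f ⁻¹' {y : X | ∃ k : ℕ, f^[k] x = y} = {y : X | ∃ k : ℕ, f^[k] x = y} :=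
  fair_measure_atoms_totally_invariant_periodic_general f Xp hcover hinj μ hinv hfair x hx
end

section
/- For the unbiased simple random walk on ℤ (transition matrix M with m_{ij} = 1 iff |i−j| = 1), the associated Markov shift Σ_M admits no fair measure, while for every point y₀ and every backward trajectory (y_n), the geometric averages ⁿ√(c(y₀)⋯c(y_{n−1})) converge to 2. -/
open MeasureTheory
open scoped ENNReal

/-- The one-sided Markov shift of the unbiased simple random walk on `ℤ`:
sequences `ω : ℕ → ℤ` with `|ω (k+1) - ω k| = 1` for all `k`. -/
def RWSpace : Set (ℕ → ℤ) :=
  {ω | ∀ k : ℕ, ω (k + 1) - ω k = 1 ∨ ω (k + 1) - ω k = -1}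

/-- The shift map on `RWSpace`. -/
def rwShift : RWSpace → RWSpace :=
  fun ω => ⟨fun k => ω.1 (k + 1), fun k => ω.2 (k + 1)⟩

/-- The cylinder set of sequences whose first `n + 1` symbols agree with `w`. -/
def rwCyl (n : ℕ) (w : ℕ → ℤ) : Set RWSpace :=
  {ω | ∀ k ≤ n, ω.1 k = w k}

/-- Prepend a symbol to a word. -/
def rwPrepend (i : ℤ) (w : ℕ → ℤ) : ℕ → ℤ :=
  fun k => match k with
  | 0 => i
  | Nat.succ k' => w k'

/-!
Fairness on the two-symbol cylinders `[i, i ± 1]` forces `j ↦ μ [j]` to be harmonic on `ℤ`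
(`μ [i] = (μ [i - 1] + μ [i + 1]) / 2`): this is the null recurrence of the simple random walk.
A nonnegative harmonic function on `ℤ` is affine with zero slope, hence constant, and a constant
cannot be the mass distribution of a finite nonzero measure over the infinitely many disjoint
cylinders `[j]`. On the other hand every point has exactly two preimages, so the geometric averages
are constantly `2`.
-/

section HarmonicOnInt

variable {R : Type*}

theorem Int.sub_eq_of_two_mul_eq_add [CommRing R] {f : ℤ → R}
    (hf : ∀ i, 2 * f i = f (i - 1) + f (i + 1)) (i : ℤ) : f (i + 1) - f i = f 1 - f 0 := by
  induction i using Int.induction_on with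
  | zero => simp
  | succ n ih =>
    have h := hf (n + 1)
    rw [add_sub_cancel_right] at h
    linear_combination h.symm + ih
  | pred n ih =>
    rw [sub_add_cancel]
    linear_combination hf (-n) + ih

theorem Int.eq_add_mul_of_sub_eq [CommRing R] {f : ℤ → R} {d : R}
    (hf : ∀ i, f (i + 1) - f i = d) (i : ℤ) : f i = f 0 + i * d := by
  induction i using Int.induction_on with
  | zero => simp
  | succ n ih =>
    push_cast at ih ⊢
    linear_combination hf n + ih
  | pred n ih =>
    have h := hf (-n - 1)
    rw [sub_add_cancel] at h
    push_cast at ih ⊢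
    linear_combination ih - h

theorem eq_zero_of_forall_int_mul_le [Field R] [LinearOrder R] [IsStrictOrderedRing R]
    [Archimedean R] {d C : R} (h : ∀ i : ℤ, i * d ≤ C) : d = 0 := by
  rcases lt_trichotomy d 0 with hd | hd | hd
  · obtain ⟨n, hn⟩ := exists_int_lt (C / d)
    have := h n
    rw [lt_div_iff_of_neg hd] at hn
    linarith
  · exact hd
  · obtain ⟨n, hn⟩ := exists_int_gt (C / d)
    have := h n
    rw [div_lt_iff₀ hd] at hn
    linarith

theorem Int.eq_of_two_mul_eq_add_of_bddBelow [Field R] [LinearOrder R] [IsStrictOrderedRing R]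
    [Archimedean R] {f : ℤ → R} (hf : ∀ i, 2 * f i = f (i - 1) + f (i + 1))
    (hbdd : BddBelow (Set.range f)) (i : ℤ) : f i = f 0 := by
  obtain ⟨C, hC⟩ := hbdd
  have hslope : f 1 - f 0 = 0 := by
    refine eq_zero_of_forall_int_mul_le (C := f 0 - C) fun j => ?_
    have := hC ⟨-j, rfl⟩
    rw [Int.eq_add_mul_of_sub_eq (Int.sub_eq_of_two_mul_eq_add hf)] at this
    push_cast at this
    linarith
  rw [Int.eq_add_mul_of_sub_eq (Int.sub_eq_of_two_mul_eq_add hf) i, hslope, mul_zero, add_zero]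

end HarmonicOnInt

section Cylinders

theorem rwCyl_measurable (n : ℕ) (w : ℕ → ℤ) : MeasurableSet (rwCyl n w) := by
  have : rwCyl n w = ⋂ k, ⋂ (_ : k ≤ n), (fun ω : RWSpace => ω.1 k) ⁻¹' {w k} := by
    ext ω
    simp [rwCyl]
  rw [this]
  exact .iInter fun k => .iInter fun _ =>
    ((measurable_pi_apply k).comp measurable_subtype_coe) (.singleton _)

/-- The cylinder `[j]`. -/
def rwSymbolCyl (j : ℤ) : Set RWSpace := rwCyl 0 fun _ => j

/-- The cylinder `[i, j]`. -/
def rwPairCyl (i j : ℤ) : Set RWSpace := rwCyl 1 (rwPrepend i fun _ => j)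

theorem mem_rwSymbolCyl {j : ℤ} {ω : RWSpace} : ω ∈ rwSymbolCyl j ↔ ω.1 0 = j :=
  ⟨fun h => h 0 le_rfl, fun h k hk => by rwa [Nat.le_zero.mp hk]⟩

theorem mem_rwPairCyl {i j : ℤ} {ω : RWSpace} : ω ∈ rwPairCyl i j ↔ ω.1 0 = i ∧ ω.1 1 = j := by
  refine ⟨fun h => ⟨h 0 zero_le_one, h 1 le_rfl⟩, fun ⟨h0, h1⟩ k hk => ?_⟩
  interval_cases k
  exacts [h0, h1]

theorem rwSymbolCyl_eq_union (i : ℤ) :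
    rwSymbolCyl i = rwPairCyl i (i - 1) ∪ rwPairCyl i (i + 1) := by
  ext ω
  simp only [Set.mem_union, mem_rwSymbolCyl, mem_rwPairCyl]
  have hstep : ω.1 1 - ω.1 0 = 1 ∨ ω.1 1 - ω.1 0 = -1 := ω.2 0
  omega

theorem disjoint_rwPairCyl_sub_add (i : ℤ) :
    Disjoint (rwPairCyl i (i - 1)) (rwPairCyl i (i + 1)) :=
  Set.disjoint_left.mpr fun ω h₁ h₂ => by
    rw [mem_rwPairCyl] at h₁ h₂
    omega

theorem iUnion_rwSymbolCyl : ⋃ j, rwSymbolCyl j = Set.univ :=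
  Set.iUnion_eq_univ_iff.mpr fun ω => ⟨ω.1 0, mem_rwSymbolCyl.mpr rfl⟩

theorem pairwise_disjoint_rwSymbolCyl : Pairwise (Function.onFun Disjoint rwSymbolCyl) :=
  fun _ _ hij => Set.disjoint_left.mpr fun _ hi hj =>
    hij ((mem_rwSymbolCyl.mp hi).symm.trans (mem_rwSymbolCyl.mp hj))

end Cylinders

section FairMeasure

variable {μ : Measure RWSpace}

theorem two_mul_measureReal_rwSymbolCyl [IsFiniteMeasure μ]
    (hfair : ∀ i j, (j - i = 1 ∨ j - i = -1) → μ (rwPairCyl i j) = μ (rwSymbolCyl j) / 2)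
    (i : ℤ) :
    2 * μ.real (rwSymbolCyl i) = μ.real (rwSymbolCyl (i - 1)) + μ.real (rwSymbolCyl (i + 1)) := by
  rw [rwSymbolCyl_eq_union i, measureReal_union (disjoint_rwPairCyl_sub_add i) (rwCyl_measurable _ _),
    measureReal_def, measureReal_def, hfair i (i - 1) (by omega), hfair i (i + 1) (by omega),
    ENNReal.toReal_div, ENNReal.toReal_div, measureReal_def, measureReal_def]
  simp only [ENNReal.toReal_ofNat]
  ring

theorem eq_zero_of_measure_rwPairCyl [IsFiniteMeasure μ]
    (hfair : ∀ i j, (j - i = 1 ∨ j - i = -1) → μ (rwPairCyl i j) = μ (rwSymbolCyl j) / 2) :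
    μ = 0 := by
  have hconst (j : ℤ) : μ (rwSymbolCyl j) = μ (rwSymbolCyl 0) :=
    (measureReal_eq_measureReal_iff).mp <|
      Int.eq_of_two_mul_eq_add_of_bddBelow (two_mul_measureReal_rwSymbolCyl hfair)
        ⟨0, by rintro _ ⟨j, rfl⟩; exact measureReal_nonneg⟩ j
  have huniv : μ Set.univ = ∑' _ : ℤ, μ (rwSymbolCyl 0) := by
    rw [← iUnion_rwSymbolCyl, measure_iUnion pairwise_disjoint_rwSymbolCyl
      fun j => rwCyl_measurable _ _, tsum_congr hconst]
  have hzero : μ (rwSymbolCyl 0) = 0 := by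
    by_contra hne
    exact measure_ne_top μ Set.univ (huniv.trans (ENNReal.tsum_const_eq_top_of_ne_zero hne))
  rw [← Measure.measure_univ_eq_zero, huniv, hzero, tsum_zero]

end FairMeasure

section Preimages

theorem rwPrepend_mem {i : ℤ} {x : ℕ → ℤ} (hx : x ∈ RWSpace)
    (h : x 0 - i = 1 ∨ x 0 - i = -1) : rwPrepend i x ∈ RWSpace
  | 0 => h
  | k + 1 => hx k

theorem rwPrepend_rwShift (ω : RWSpace) : rwPrepend (ω.1 0) (rwShift ω).1 = ω.1 := by
  funext k
  cases k <;> rfl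

theorem rwShift_preimage_singleton (x : RWSpace) :
    rwShift ⁻¹' {x} =
      {⟨rwPrepend (x.1 0 - 1) x.1, rwPrepend_mem x.2 (by left; ring)⟩,
       ⟨rwPrepend (x.1 0 + 1) x.1, rwPrepend_mem x.2 (by right; ring)⟩} := by
  ext ω
  simp only [Set.mem_preimage, Set.mem_singleton_iff, Set.mem_insert_iff]
  constructor
  · rintro rfl
    have hstep : ω.1 1 - ω.1 0 = 1 ∨ ω.1 1 - ω.1 0 = -1 := ω.2 0
    have hshift : (rwShift ω).1 0 = ω.1 1 := rfl
    refine hstep.imp (fun h => ?_) (fun h => ?_) <;>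
    · ext1
      conv_lhs => rw [← rwPrepend_rwShift ω]
      congr 1
      omega
  · rintro (rfl | rfl) <;> rfl

theorem ncard_rwShift_preimage_singleton (x : RWSpace) : (rwShift ⁻¹' {x}).ncard = 2 := by
  rw [rwShift_preimage_singleton]
  refine Set.ncard_pair fun h => ?_
  have := congrFun (congrArg Subtype.val h) 0
  simp only [rwPrepend] at this
  omega

end Preimages

/-- For the unbiased simple random walk shift `Σ_M` (`m i j = 1` iff `|i-j| = 1`),
there is no fair measure (a shift-invariant Borel probability measure satisfying
`μ([i] ∩ σ⁻¹ B) = μ B / c(B)` on cylinders, where `c(B) = 2`); nevertheless for every point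
`y₀` and every backward trajectory `(yₙ)`, the geometric averages
`(c(y₀) ⋯ c(y_{n-1}))^(1/n)` converge to `2`. -/
theorem rw_no_fair_measure_and_geometric_average :
    (¬ ∃ μ : Measure RWSpace, IsProbabilityMeasure μ ∧
      (∀ A : Set RWSpace, MeasurableSet A → μ (rwShift ⁻¹' A) = μ A) ∧
      (∀ (n : ℕ) (w : ℕ → ℤ),
        (∀ k < n, w (k + 1) - w k = 1 ∨ w (k + 1) - w k = -1) →
        ∀ i : ℤ, w 0 - i = 1 ∨ w 0 - i = -1 →
          μ (rwCyl (n + 1) (rwPrepend i w)) = μ (rwCyl n w) / 2)) ∧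
    (∀ y : ℕ → RWSpace, (∀ n : ℕ, rwShift (y (n + 1)) = y n) →
      Filter.Tendsto
        (fun n : ℕ => (∏ k ∈ Finset.range n, ((rwShift ⁻¹' {y k}).ncard : ℝ)) ^ ((n : ℝ)⁻¹))
        Filter.atTop (nhds 2)) := by
  refine ⟨?_, fun y _ => ?_⟩
  · rintro ⟨μ, hprob, -, hfair⟩
    refine IsProbabilityMeasure.ne_zero μ (eq_zero_of_measure_rwPairCyl fun i j hij => ?_)
    exact hfair 0 (fun _ => j) (fun k hk => absurd hk k.not_lt_zero) i hij
  · have hprod (n : ℕ) :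
        ∏ k ∈ Finset.range n, ((rwShift ⁻¹' {y k}).ncard : ℝ) = 2 ^ n := by
      simp [ncard_rwShift_preimage_singleton]
    refine tendsto_const_nhds.congr' ?_
    filter_upwards [Filter.eventually_ne_atTop 0] with n hn
    rw [hprod, Real.pow_rpow_inv_natCast zero_le_two hn]
end

section
/- A topologically mixing interval map has no homterval: for every nonempty open interval U ⊂ [0,1] there is some n ≥ 0 such that f does not map fⁿ(U) homeomorphically onto f^{n+1}(U), provided f has at least one critical point — and a mixing countably Markov interval map always has a critical point in (0,1). -/
/-- A countably Markov structure for an interval map `f` on `[0,1]`: a countable partition of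
`[0,1]` into open intervals `(a i, b i)` and a countable set `C` of partition points, such
that `f` maps `[0,1]` into itself, is continuous and strictly monotone on each partition
interval, the image of a partition interval either contains or is disjoint from each
partition interval, and the partition points are forward invariant. -/
structure CountMarkov (f : ℝ → ℝ) where
  ι : Type
  countable : Countable ι
  a : ι → ℝ
  b : ι → ℝ
  lt : ∀ i, a i < b i
  sub : ∀ i, Set.Ioo (a i) (b i) ⊆ Set.Icc 0 1
  C : Set ℝ
  C_cnt : C.Countable
  C_sub : C ⊆ Set.Icc 0 1
  cover : Set.Icc 0 1 ⊆ (⋃ i, Set.Ioo (a i) (b i)) ∪ C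
  disj : Pairwise fun i j => Disjoint (Set.Ioo (a i) (b i)) (Set.Ioo (a j) (b j))
  disjC : ∀ i, Disjoint (Set.Ioo (a i) (b i)) C
  mapsTo : Set.MapsTo f (Set.Icc 0 1) (Set.Icc 0 1)
  cont : ∀ i, ContinuousOn f (Set.Ioo (a i) (b i))
  mono : ∀ i, StrictMonoOn f (Set.Ioo (a i) (b i)) ∨ StrictAntiOn f (Set.Ioo (a i) (b i))
  markov : ∀ i j, Set.Ioo (a j) (b j) ⊆ f '' Set.Ioo (a i) (b i) ∨
    f '' Set.Ioo (a i) (b i) ∩ Set.Ioo (a j) (b j) = ∅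
  fwdC : f '' C ⊆ C

/-- Topological mixing of `f` relative to `[0,1]`: any nonempty relatively open subset of
`[0,1]` eventually meets any other under iteration. -/
def MixingOn (f : ℝ → ℝ) : Prop :=
  ∀ U V : Set ℝ, IsOpen U → IsOpen V →
    (U ∩ Set.Icc 0 1).Nonempty → (V ∩ Set.Icc 0 1).Nonempty →
    ∃ N : ℕ, ∀ n ≥ N, (f^[n] '' (U ∩ Set.Icc 0 1) ∩ (V ∩ Set.Icc 0 1)).Nonempty

/-- `f` maps `A` homeomorphically onto `B`. -/
def MapsHomeoOnto (f : ℝ → ℝ) (A B : Set ℝ) : Prop :=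
  f '' A = B ∧ ContinuousOn f A ∧ Set.InjOn f A

/-- A homterval: a nonempty open interval `U` such that for all `n ≥ 0`, `f` maps `fⁿ(U)`
homeomorphically onto `f^{n+1}(U)`. -/
def Homterval (f : ℝ → ℝ) (U : Set ℝ) : Prop :=
  ∀ n : ℕ, MapsHomeoOnto f (f^[n] '' U) (f^[n + 1] '' U)

/-- If `g` is locally strictly monotone at every point of `(0,1)`, then it is strictly
monotone on `(0,1)`. -/
private lemma strictMonoOn_of_local (g : ℝ → ℝ)
    (h : ∀ x ∈ Set.Ioo (0:ℝ) 1, ∃ ε > (0:ℝ), Set.Ioo (x-ε) (x+ε) ⊆ Set.Ioo 0 1 ∧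
      StrictMonoOn g (Set.Ioo (x-ε) (x+ε))) :
    StrictMonoOn g (Set.Ioo (0:ℝ) 1) := by
  intro x hx y hy hxy
  set P : Set ℝ := {z | z ∈ Set.Icc x y ∧ ∀ w ∈ Set.Ioc x z, g x < g w} with hPdef
  have hxP : x ∈ P := ⟨Set.left_mem_Icc.2 hxy.le, fun w hw => absurd hw.2 (not_le.2 hw.1)⟩
  have hne : P.Nonempty := ⟨x, hxP⟩
  have hbdd : BddAbove P := ⟨y, fun z hz => hz.1.2⟩
  set s := sSup P with hs
  have hxs : x ≤ s := le_csSup hbdd hxP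
  have hsy : s ≤ y := csSup_le hne (fun z hz => hz.1.2)
  have hsIoo : s ∈ Set.Ioo (0:ℝ) 1 := ⟨lt_of_lt_of_le hx.1 hxs, lt_of_le_of_lt hsy hy.2⟩
  obtain ⟨ε, hεpos, hsub, hmono⟩ := h s hsIoo
  have hsP : s ∈ P := by
    refine ⟨⟨hxs, hsy⟩, ?_⟩
    intro w hw
    obtain ⟨p, hpP, hps⟩ := exists_lt_of_lt_csSup hne (by linarith : s - ε < s)
    have hpls : p ≤ s := le_csSup hbdd hpP
    by_cases hwp : w ≤ p
    · exact hpP.2 w ⟨hw.1, hwp⟩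
    · push_neg at hwp
      have hwball : w ∈ Set.Ioo (s-ε) (s+ε) := ⟨by linarith [hw.2], by linarith [hw.2]⟩
      by_cases hxb : s - ε < x
      · have hxball : x ∈ Set.Ioo (s-ε) (s+ε) := ⟨hxb, by linarith⟩
        exact hmono hxball hwball hw.1
      · push_neg at hxb
        have hxp : x < p := by linarith
        have h1 : g x < g p := hpP.2 p ⟨hxp, le_refl p⟩
        have hpball : p ∈ Set.Ioo (s-ε) (s+ε) := ⟨hps, by linarith⟩
        exact h1.trans (hmono hpball hwball hwp)
  have hsy' : s = y := by
    by_contra hne'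
    have hslty : s < y := lt_of_le_of_ne hsy hne'
    have hsz : s < min y (s + ε/2) := lt_min hslty (by linarith)
    have hzP : min y (s + ε/2) ∈ P := by
      refine ⟨⟨by linarith, min_le_left _ _⟩, ?_⟩
      intro w hw
      by_cases hws : w ≤ s
      · exact hsP.2 w ⟨hw.1, hws⟩
      · push_neg at hws
        have hzle : min y (s + ε/2) ≤ s + ε/2 := min_le_right _ _
        have hwball : w ∈ Set.Ioo (s-ε) (s+ε) := ⟨by linarith, by linarith [hw.2]⟩
        by_cases hxb : s - ε < x
        · have hxball : x ∈ Set.Ioo (s-ε) (s+ε) := ⟨hxb, by linarith⟩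
          exact hmono hxball hwball hw.1
        · push_neg at hxb
          have hxls : x < s := by linarith
          have h1 : g x < g s := hsP.2 s ⟨hxls, le_refl s⟩
          have hsball : s ∈ Set.Ioo (s-ε) (s+ε) := ⟨by linarith, by linarith⟩
          exact h1.trans (hmono hsball hwball hws)
    have := le_csSup hbdd hzP
    have : min y (s + ε/2) ≤ s := this
    linarith
  exact hsP.2 y ⟨hxy, hsy'.ge⟩

/-- No nontrivial subinterval of `[0,1]` on which `f` is constant: any open interval
contains two points with distinct values, thanks to the Markov structure. -/
private lemma noflat (f : ℝ → ℝ) (mp : CountMarkov f) {u v : ℝ} (huv : u < v)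
    (hsub : Set.Ioo u v ⊆ Set.Icc 0 1) :
    ∃ w1 ∈ Set.Ioo u v, ∃ w2 ∈ Set.Ioo u v, f w1 ≠ f w2 := by
  have hdense : Dense (mp.Cᶜ) := mp.C_cnt.dense_compl ℝ
  obtain ⟨w0, hw0C, hw0⟩ := hdense.exists_mem_open isOpen_Ioo (Set.nonempty_Ioo.2 huv)
  have hw0I : w0 ∈ Set.Icc 0 1 := hsub hw0
  rcases mp.cover hw0I with hin | hC
  · obtain ⟨i, hi⟩ := Set.mem_iUnion.1 hin
    set l := max u (mp.a i) with hl
    have hlw0 : l < w0 := max_lt hw0.1 hi.1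
    set w1 := (l + w0)/2 with hw1def
    have hlw1 : l < w1 := by simp only [hw1def]; linarith
    have hw1w0 : w1 < w0 := by simp only [hw1def]; linarith
    have hw1uv : w1 ∈ Set.Ioo u v :=
      ⟨lt_of_le_of_lt (le_max_left _ _) hlw1, hw1w0.trans hw0.2⟩
    have hw1i : w1 ∈ Set.Ioo (mp.a i) (mp.b i) :=
      ⟨lt_of_le_of_lt (le_max_right _ _) hlw1, hw1w0.trans hi.2⟩
    refine ⟨w1, hw1uv, w0, hw0, ?_⟩
    rcases mp.mono i with hm | ha
    · exact (hm hw1i hi hw1w0).ne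
    · exact (ha hw1i hi hw1w0).ne'
  · exact absurd hC hw0C

/-- If `f` had no critical point in `(0,1)`, mixing would fail. -/
private lemma no_crit_false (f : ℝ → ℝ) (mp : CountMarkov f) (hmix : MixingOn f)
    (h : ∀ x ∈ Set.Ioo (0:ℝ) 1, ∃ ε > (0:ℝ),
      MonotoneOn f (Set.Ioo (x-ε) (x+ε) ∩ Set.Icc 0 1) ∨
      AntitoneOn f (Set.Ioo (x-ε) (x+ε) ∩ Set.Icc 0 1)) : False := by
  classical
  -- Step 1: local *strict* monotonicity
  have hloc : ∀ x ∈ Set.Ioo (0:ℝ) 1, ∃ ε > (0:ℝ), Set.Ioo (x-ε) (x+ε) ⊆ Set.Ioo 0 1 ∧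
      (StrictMonoOn f (Set.Ioo (x-ε) (x+ε)) ∨ StrictAntiOn f (Set.Ioo (x-ε) (x+ε))) := by
    intro x hx
    obtain ⟨ε, hε, hor⟩ := h x hx
    set ε' := min ε (min x (1-x)) with hε'def
    have hε'pos : 0 < ε' := lt_min hε (lt_min hx.1 (by linarith [hx.2]))
    have h1 : ε' ≤ ε := min_le_left _ _
    have h2 : ε' ≤ x := (min_le_right _ _).trans (min_le_left _ _)
    have h3 : ε' ≤ 1 - x := (min_le_right _ _).trans (min_le_right _ _)
    have hsub01 : Set.Ioo (x-ε') (x+ε') ⊆ Set.Ioo 0 1 :=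
      fun z hz => ⟨by linarith [hz.1], by linarith [hz.2]⟩
    have hdom : Set.Ioo (x-ε') (x+ε') ⊆ Set.Ioo (x-ε) (x+ε) ∩ Set.Icc 0 1 := by
      intro z hz
      exact ⟨⟨by linarith [hz.1], by linarith [hz.2]⟩, Set.Ioo_subset_Icc_self (hsub01 hz)⟩
    have hIccsub : ∀ p q : ℝ, p ∈ Set.Ioo (x-ε') (x+ε') → q ∈ Set.Ioo (x-ε') (x+ε') →
        Set.Ioo p q ⊆ Set.Icc 0 1 := by
      intro p q hp hq z hz
      exact Set.Ioo_subset_Icc_self (hsub01 ⟨by linarith [hz.1, hp.1], by linarith [hz.2, hq.2]⟩)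
    have hmid : ∀ p q : ℝ, p ∈ Set.Ioo (x-ε') (x+ε') → q ∈ Set.Ioo (x-ε') (x+ε') →
        ∀ w ∈ Set.Ioo p q, w ∈ Set.Ioo (x-ε') (x+ε') :=
      fun p q hp hq w hw => ⟨by linarith [hw.1, hp.1], by linarith [hw.2, hq.2]⟩
    refine ⟨ε', hε'pos, hsub01, ?_⟩
    rcases hor with hm | ha
    · left
      intro p hp q hq hpq
      rcases lt_or_eq_of_le (hm (hdom hp) (hdom hq) hpq.le) with hlt | heq
      · exact hlt
      · exfalso
        obtain ⟨w1, hw1, w2, hw2, hne⟩ := noflat f mp hpq (hIccsub p q hp hq)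
        have hval : ∀ w ∈ Set.Ioo p q, f w = f p := by
          intro w hw
          have hle1 := hm (hdom hp) (hdom (hmid p q hp hq w hw)) hw.1.le
          have hle2 := hm (hdom (hmid p q hp hq w hw)) (hdom hq) hw.2.le
          rw [← heq] at hle2
          exact le_antisymm hle2 hle1
        exact hne ((hval w1 hw1).trans (hval w2 hw2).symm)
    · right
      intro p hp q hq hpq
      rcases lt_or_eq_of_le (ha (hdom hp) (hdom hq) hpq.le) with hlt | heq
      · exact hlt
      · exfalso
        obtain ⟨w1, hw1, w2, hw2, hne⟩ := noflat f mp hpq (hIccsub p q hp hq)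
        have hval : ∀ w ∈ Set.Ioo p q, f w = f p := by
          intro w hw
          have hle1 := ha (hdom hp) (hdom (hmid p q hp hq w hw)) hw.1.le
          have hle2 := ha (hdom (hmid p q hp hq w hw)) (hdom hq) hw.2.le
          rw [heq] at hle2
          exact le_antisymm hle1 hle2
        exact hne ((hval w1 hw1).trans (hval w2 hw2).symm)
  -- Step 2: global strict monotonicity via connectedness
  set A : Set ℝ := {x | ∃ ε > (0:ℝ), Set.Ioo (x-ε) (x+ε) ⊆ Set.Ioo 0 1 ∧
    StrictMonoOn f (Set.Ioo (x-ε) (x+ε))} with hAdef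
  set B : Set ℝ := {x | ∃ ε > (0:ℝ), Set.Ioo (x-ε) (x+ε) ⊆ Set.Ioo 0 1 ∧
    StrictAntiOn f (Set.Ioo (x-ε) (x+ε))} with hBdef
  have hAopen : IsOpen A := by
    rw [Metric.isOpen_iff]
    rintro x ⟨ε, hε, hsub, hm⟩
    refine ⟨ε/2, by linarith, fun y hy => ?_⟩
    rw [Metric.mem_ball, Real.dist_eq, abs_sub_lt_iff] at hy
    have hss : Set.Ioo (y-ε/2) (y+ε/2) ⊆ Set.Ioo (x-ε) (x+ε) :=
      fun z hz => ⟨by linarith [hz.1, hy.1, hy.2], by linarith [hz.2, hy.1, hy.2]⟩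
    exact ⟨ε/2, by linarith, hss.trans hsub, hm.mono hss⟩
  have hBopen : IsOpen B := by
    rw [Metric.isOpen_iff]
    rintro x ⟨ε, hε, hsub, hm⟩
    refine ⟨ε/2, by linarith, fun y hy => ?_⟩
    rw [Metric.mem_ball, Real.dist_eq, abs_sub_lt_iff] at hy
    have hss : Set.Ioo (y-ε/2) (y+ε/2) ⊆ Set.Ioo (x-ε) (x+ε) :=
      fun z hz => ⟨by linarith [hz.1, hy.1, hy.2], by linarith [hz.2, hy.1, hy.2]⟩
    exact ⟨ε/2, by linarith, hss.trans hsub, hm.mono hss⟩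
  have hdisj : Disjoint A B := by
    rw [Set.disjoint_left]
    rintro x ⟨ε1, h1, hs1, hm⟩ ⟨ε2, h2, hs2, ha⟩
    have hεle1 : min ε1 ε2 ≤ ε1 := min_le_left _ _
    have hεle2 : min ε1 ε2 ≤ ε2 := min_le_right _ _
    have hεpos : 0 < min ε1 ε2 := lt_min h1 h2
    have hx1 : x ∈ Set.Ioo (x-ε1) (x+ε1) := ⟨by linarith, by linarith⟩
    have hy1 : x + min ε1 ε2/2 ∈ Set.Ioo (x-ε1) (x+ε1) := ⟨by linarith, by linarith⟩
    have hx2 : x ∈ Set.Ioo (x-ε2) (x+ε2) := ⟨by linarith, by linarith⟩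
    have hy2 : x + min ε1 ε2/2 ∈ Set.Ioo (x-ε2) (x+ε2) := ⟨by linarith, by linarith⟩
    have l1 := hm hx1 hy1 (by linarith)
    have l2 := ha hx2 hy2 (by linarith)
    linarith
  have hcover : Set.Ioo (0:ℝ) 1 ⊆ A ∪ B := by
    intro x hx
    obtain ⟨ε, hε, hsub, hor⟩ := hloc x hx
    rcases hor with hm | ha
    · exact Or.inl ⟨ε, hε, hsub, hm⟩
    · exact Or.inr ⟨ε, hε, hsub, ha⟩
  have hsm : StrictMonoOn f (Set.Ioo (0:ℝ) 1) ∨ StrictAntiOn f (Set.Ioo (0:ℝ) 1) := by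
    rcases isPreconnected_Ioo.subset_or_subset hAopen hBopen hdisj hcover with hA | hB
    · left
      exact strictMonoOn_of_local f (fun x hx => hA hx)
    · right
      have hg : StrictMonoOn (fun t => -f t) (Set.Ioo (0:ℝ) 1) := by
        refine strictMonoOn_of_local _ (fun x hx => ?_)
        obtain ⟨ε, hε, hsub, ha⟩ := hB hx
        exact ⟨ε, hε, hsub, fun u hu v hv huv => neg_lt_neg (ha hu hv huv)⟩
      intro u hu v hv huv
      have := hg hu hv huv
      simpa using this
  -- Step 3: f maps (0,1) to (0,1), and even iterates are strictly monotone
  have hmapsTo : Set.MapsTo f (Set.Ioo (0:ℝ) 1) (Set.Ioo (0:ℝ) 1) := by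
    intro y hy
    have hz1 : y/2 ∈ Set.Ioo (0:ℝ) 1 := ⟨by linarith [hy.1], by linarith [hy.1, hy.2]⟩
    have hz2 : (y+1)/2 ∈ Set.Ioo (0:ℝ) 1 := ⟨by linarith [hy.1, hy.2], by linarith [hy.2]⟩
    have hz1y : y/2 < y := by linarith [hy.1]
    have hyz2 : y < (y+1)/2 := by linarith [hy.2]
    have hfz1 := mp.mapsTo (Set.Ioo_subset_Icc_self hz1)
    have hfz2 := mp.mapsTo (Set.Ioo_subset_Icc_self hz2)
    rcases hsm with hm | ha
    · exact ⟨lt_of_le_of_lt hfz1.1 (hm hz1 hy hz1y), lt_of_lt_of_le (hm hy hz2 hyz2) hfz2.2⟩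
    · exact ⟨lt_of_le_of_lt hfz2.1 (ha hy hz2 hyz2), lt_of_lt_of_le (ha hz1 hy hz1y) hfz1.2⟩
  have h2 : ∀ p ∈ Set.Ioo (0:ℝ) 1, ∀ q ∈ Set.Ioo (0:ℝ) 1, p < q → f (f p) < f (f q) := by
    intro p hp q hq hpq
    rcases hsm with hm | ha
    · exact hm (hmapsTo hp) (hmapsTo hq) (hm hp hq hpq)
    · exact ha (hmapsTo hq) (hmapsTo hp) (ha hp hq hpq)
  have hiter : ∀ k : ℕ, Set.MapsTo (f^[2*k]) (Set.Ioo (0:ℝ) 1) (Set.Ioo (0:ℝ) 1) ∧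
      ∀ p ∈ Set.Ioo (0:ℝ) 1, ∀ q ∈ Set.Ioo (0:ℝ) 1, p < q → f^[2*k] p < f^[2*k] q := by
    intro k
    induction k with
    | zero =>
      constructor
      · intro t ht; simpa using ht
      · intro p hp q hq hpq; simpa using hpq
    | succ k ih =>
      have harr : ∀ t : ℝ, f^[2*(k+1)] t = f (f (f^[2*k] t)) := by
        intro t
        have he : 2*(k+1) = (2*k) + 1 + 1 := by ring
        rw [he, Function.iterate_succ_apply', Function.iterate_succ_apply']
      constructor
      · intro t ht
        rw [harr]
        exact hmapsTo (hmapsTo (ih.1 ht))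
      · intro p hp q hq hpq
        rw [harr, harr]
        exact h2 _ (ih.1 hp) _ (ih.1 hq) (ih.2 p hp q hq hpq)
  -- Step 4: contradiction with mixing
  have hV1ne : (Set.Ioo (1/4:ℝ) (1/2) ∩ Set.Icc 0 1).Nonempty := ⟨3/8, by norm_num⟩
  have hV2ne : (Set.Ioo (1/2:ℝ) (3/4) ∩ Set.Icc 0 1).Nonempty := ⟨5/8, by norm_num⟩
  obtain ⟨N1, hN1⟩ := hmix _ _ isOpen_Ioo isOpen_Ioo hV1ne hV2ne
  obtain ⟨N2, hN2⟩ := hmix _ _ isOpen_Ioo isOpen_Ioo hV2ne hV1ne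
  obtain ⟨y1, ⟨p, hp, hfp⟩, hy1⟩ := hN1 (2*(N1+N2)) (by omega)
  obtain ⟨y2, ⟨q, hq, hfq⟩, hy2⟩ := hN2 (2*(N1+N2)) (by omega)
  have hpI : p ∈ Set.Ioo (0:ℝ) 1 := ⟨by linarith [hp.1.1], by linarith [hp.1.2]⟩
  have hqI : q ∈ Set.Ioo (0:ℝ) 1 := ⟨by linarith [hq.1.1], by linarith [hq.1.2]⟩
  have hpq : p < q := by linarith [hp.1.2, hq.1.1]
  have hlt := (hiter (N1+N2)).2 p hpI q hqI hpq
  rw [hfp, hfq] at hlt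
  linarith [hy1.1.1, hy2.1.2]

/-- A countably Markov and topologically mixing interval map has a critical
point in `(0,1)` (a point on no neighborhood of which `f` is monotone), and has no homterval:
for every nonempty open interval `U ⊆ [0,1]` there is `n ≥ 0` such that `f` does not map
`fⁿ(U)` homeomorphically onto `f^{n+1}(U)`. -/
theorem mixing_markov_critical_point_and_no_homterval
    (f : ℝ → ℝ) (mp : CountMarkov f) (hmix : MixingOn f) :
    (∃ x ∈ Set.Ioo (0 : ℝ) 1, ∀ ε > (0 : ℝ),
      ¬ MonotoneOn f (Set.Ioo (x - ε) (x + ε) ∩ Set.Icc 0 1) ∧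
      ¬ AntitoneOn f (Set.Ioo (x - ε) (x + ε) ∩ Set.Icc 0 1)) ∧
    (∀ c d : ℝ, c < d → Set.Ioo c d ⊆ Set.Icc 0 1 → ¬ Homterval f (Set.Ioo c d)) := by
  classical
  have hcrit : ∃ x ∈ Set.Ioo (0 : ℝ) 1, ∀ ε > (0 : ℝ),
      ¬ MonotoneOn f (Set.Ioo (x - ε) (x + ε) ∩ Set.Icc 0 1) ∧
      ¬ AntitoneOn f (Set.Ioo (x - ε) (x + ε) ∩ Set.Icc 0 1) := by
    by_contra hc
    push_neg at hc
    refine no_crit_false f mp hmix ?_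
    intro x hx
    obtain ⟨ε, hε, himp⟩ := hc x hx
    refine ⟨ε, hε, ?_⟩
    by_cases hm : MonotoneOn f (Set.Ioo (x - ε) (x + ε) ∩ Set.Icc 0 1)
    · exact Or.inl hm
    · exact Or.inr (himp hm)
  refine ⟨hcrit, ?_⟩
  obtain ⟨x, hxI, hxc⟩ := hcrit
  intro c d hcd hsub hH
  simp only [Homterval, MapsHomeoOnto] at hH
  have hUIcc : Set.Ioo c d ∩ Set.Icc 0 1 = Set.Ioo c d := Set.inter_eq_self_of_subset_left hsub
  have hstep : ∀ n : ℕ, f^[n+1] '' Set.Ioo c d = f '' (f^[n] '' Set.Ioo c d) := by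
    intro n
    rw [Function.iterate_succ' f n, Set.image_comp]
  have hconn : ∀ n : ℕ, IsPreconnected (f^[n] '' Set.Ioo c d) := by
    intro n
    induction n with
    | zero => simpa using isPreconnected_Ioo
    | succ n ih =>
      rw [hstep n]
      exact ih.image f (hH n).2.1
  have hδpos : (0:ℝ) < min x (1-x) := lt_min hxI.1 (by linarith [hxI.2])
  set δ := min x (1-x) with hδdef
  have hδx : δ ≤ x := min_le_left _ _
  have hδ1 : δ ≤ 1 - x := min_le_right _ _
  have hV1ne : (Set.Ioo (x-δ) x ∩ Set.Icc 0 1).Nonempty :=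
    ⟨x - δ/2, ⟨by linarith, by linarith⟩, ⟨by linarith, by linarith [hxI.2]⟩⟩
  have hV2ne : (Set.Ioo x (x+δ) ∩ Set.Icc 0 1).Nonempty :=
    ⟨x + δ/2, ⟨by linarith, by linarith⟩, ⟨by linarith [hxI.1], by linarith⟩⟩
  have hUne : (Set.Ioo c d ∩ Set.Icc 0 1).Nonempty := by
    rw [hUIcc]
    exact Set.nonempty_Ioo.2 hcd
  obtain ⟨N1, hN1⟩ := hmix (Set.Ioo c d) (Set.Ioo (x-δ) x) isOpen_Ioo isOpen_Ioo hUne hV1ne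
  obtain ⟨N2, hN2⟩ := hmix (Set.Ioo c d) (Set.Ioo x (x+δ)) isOpen_Ioo isOpen_Ioo hUne hV2ne
  obtain ⟨p, hpS, hpV⟩ := hN1 (max N1 N2) (le_max_left _ _)
  obtain ⟨q, hqS, hqV⟩ := hN2 (max N1 N2) (le_max_right _ _)
  rw [hUIcc] at hpS hqS
  have hpx : p < x := hpV.1.2
  have hqx : x < q := hqV.1.1
  have hpq : p ≤ q := by linarith
  have hIccpq : Set.Icc p q ⊆ f^[max N1 N2] '' Set.Ioo c d :=
    ((hconn (max N1 N2)).ordConnected).out hpS hqS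
  have hcont := (hH (max N1 N2)).2.1.mono hIccpq
  have hinj := (hH (max N1 N2)).2.2.mono hIccpq
  have hmon := ContinuousOn.strictMonoOn_of_injOn_Icc' hpq hcont hinj
  have hεpos : (0:ℝ) < min (x - p) (q - x) := lt_min (by linarith) (by linarith)
  have hT : Set.Ioo (x - min (x-p) (q-x)) (x + min (x-p) (q-x)) ∩ Set.Icc 0 1 ⊆ Set.Icc p q := by
    intro z hz
    have h1 : min (x-p) (q-x) ≤ x - p := min_le_left _ _
    have h2 : min (x-p) (q-x) ≤ q - x := min_le_right _ _
    exact ⟨by linarith [hz.1.1], by linarith [hz.1.2]⟩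
  obtain ⟨hnm, hna⟩ := hxc _ hεpos
  rcases hmon with hm | ha
  · exact hnm ((hm.monotoneOn).mono hT)
  · exact hna ((ha.antitoneOn).mono hT)
end

section
/- Let f be a countably Markov interval map. For each nonempty cylinder [i₀ ⋯ i_n] in the associated Markov shift, the set U = i₀ ∩ f⁻¹(i₁) ∩ ⋯ ∩ f⁻ⁿ(i_n) is a nonempty open interval mapped homeomorphically by fⁿ onto i_n; moreover, sets corresponding to distinct nonempty cylinders of the same length are pairwise disjoint. -/
/-- The set `U = i₀ ∩ f⁻¹(i₁) ∩ ⋯ ∩ f⁻ⁿ(iₙ)` associated with a cylinder `[i₀ ⋯ iₙ]`. -/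
def cylSet (f : ℝ → ℝ) (mp : CountMarkov f) (n : ℕ) (w : ℕ → mp.ι) : Set ℝ :=
  ⋂ k ∈ Finset.range (n + 1), f^[k] ⁻¹' Set.Ioo (mp.a (w k)) (mp.b (w k))

open Set

lemma open_ordConn_eq_Ioo (U : Set ℝ) (ho : IsOpen U) (hc : U.OrdConnected)
    (hne : U.Nonempty) (hb : U ⊆ Set.Icc 0 1) :
    ∃ c d : ℝ, c < d ∧ U = Set.Ioo c d := by
  have hbdd : BddBelow U := ⟨0, fun x hx => (hb hx).1⟩
  have hbdd' : BddAbove U := ⟨1, fun x hx => (hb hx).2⟩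
  set c := sInf U with hcdef
  set d := sSup U with hddef
  have hlt : ∀ x ∈ U, c < x ∧ x < d := by
    intro x hx
    obtain ⟨l, u, hmem, hsub⟩ := mem_nhds_iff_exists_Ioo_subset.1 (ho.mem_nhds hx)
    have h1 : (l + x) / 2 ∈ U := hsub ⟨by linarith [hmem.1, hmem.2], by linarith [hmem.1, hmem.2]⟩
    have h2 : (x + u) / 2 ∈ U := hsub ⟨by linarith [hmem.1, hmem.2], by linarith [hmem.1, hmem.2]⟩
    constructor
    · exact lt_of_le_of_lt (csInf_le hbdd h1) (by linarith [hmem.1])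
    · exact lt_of_lt_of_le (by linarith [hmem.2]) (le_csSup hbdd' h2)
  refine ⟨c, d, ?_, ?_⟩
  · obtain ⟨x, hx⟩ := hne
    exact (hlt x hx).1.trans (hlt x hx).2
  · apply Subset.antisymm
    · intro x hx; exact hlt x hx
    · rintro x ⟨hcx, hxd⟩
      obtain ⟨u, hu, hux⟩ := exists_lt_of_csInf_lt hne hcx
      obtain ⟨v, hv, hxv⟩ := exists_lt_of_lt_csSup hne hxd
      exact hc.out hu hv ⟨hux.le, hxv.le⟩

lemma cylSet_zero (f : ℝ → ℝ) (mp : CountMarkov f) (w : ℕ → mp.ι) :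
    cylSet f mp 0 w = Set.Ioo (mp.a (w 0)) (mp.b (w 0)) := by
  simp [cylSet]

lemma cylSet_succ (f : ℝ → ℝ) (mp : CountMarkov f) (n : ℕ) (w : ℕ → mp.ι) :
    cylSet f mp (n + 1) w =
      Set.Ioo (mp.a (w 0)) (mp.b (w 0)) ∩ f ⁻¹' cylSet f mp n (fun k => w (k + 1)) := by
  ext x
  simp only [cylSet, mem_iInter, Finset.mem_range, mem_preimage, mem_inter_iff]
  constructor
  · intro h
    refine ⟨by simpa using h 0 (by omega), fun k hk => ?_⟩
    simpa [Function.iterate_succ_apply] using h (k + 1) (by omega)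
  · rintro ⟨h0, h1⟩ k hk
    match k with
    | 0 => simpa using h0
    | k + 1 => simpa [Function.iterate_succ_apply] using h1 k (by omega)

lemma cylSet_subset (f : ℝ → ℝ) (mp : CountMarkov f) (n : ℕ) (w : ℕ → mp.ι) :
    cylSet f mp n w ⊆ Set.Ioo (mp.a (w 0)) (mp.b (w 0)) := by
  intro x hx
  simp only [cylSet, mem_iInter, Finset.mem_range] at hx
  simpa using hx 0 (by omega)

lemma markov_main (f : ℝ → ℝ) (mp : CountMarkov f) :
    ∀ (n : ℕ) (w : ℕ → mp.ι),
    (∀ k < n, Set.Ioo (mp.a (w (k + 1))) (mp.b (w (k + 1))) ⊆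
      f '' Set.Ioo (mp.a (w k)) (mp.b (w k))) →
    (∃ c d : ℝ, c < d ∧ cylSet f mp n w = Set.Ioo c d) ∧
    MapsHomeoOnto (f^[n]) (cylSet f mp n w) (Set.Ioo (mp.a (w n)) (mp.b (w n))) ∧
    (∀ w' : ℕ → mp.ι,
      (∀ k < n, Set.Ioo (mp.a (w' (k + 1))) (mp.b (w' (k + 1))) ⊆
        f '' Set.Ioo (mp.a (w' k)) (mp.b (w' k))) →
      (∃ k ≤ n, w' k ≠ w k) →
      Disjoint (cylSet f mp n w) (cylSet f mp n w')) := by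
  intro n
  induction n with
  | zero =>
    intro w _
    refine ⟨⟨mp.a (w 0), mp.b (w 0), mp.lt _, cylSet_zero f mp w⟩, ?_, ?_⟩
    · rw [cylSet_zero]
      exact ⟨by simp, by simpa using continuousOn_id, by simpa using injOn_id _⟩
    · rintro w' _ ⟨k, hk, hne⟩
      interval_cases k
      rw [cylSet_zero, cylSet_zero]
      exact mp.disj (fun h => hne h.symm)
  | succ n ih =>
    intro w hadm
    set w1 : ℕ → mp.ι := fun k => w (k + 1) with hw1
    have hadm1 : ∀ k < n, Set.Ioo (mp.a (w1 (k + 1))) (mp.b (w1 (k + 1))) ⊆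
        f '' Set.Ioo (mp.a (w1 k)) (mp.b (w1 k)) := fun k hk => hadm (k + 1) (by omega)
    obtain ⟨⟨c, d, hcd, hV⟩, ⟨himg, hcont, hinj⟩, hdisj⟩ := ih w1 hadm1
    set V := cylSet f mp n w1 with hVdef
    set I := Set.Ioo (mp.a (w 0)) (mp.b (w 0)) with hIdef
    have hVI : V ⊆ f '' I := fun x hx => hadm 0 (by omega) (cylSet_subset f mp n w1 hx)
    have hU : cylSet f mp (n + 1) w = I ∩ f ⁻¹' V := cylSet_succ f mp n w
    set U := I ∩ f ⁻¹' V with hUdef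
    have hUI : U ⊆ I := inter_subset_left
    have hfU : f '' U = V := by
      apply Subset.antisymm
      · rintro y ⟨x, hx, rfl⟩; exact hx.2
      · intro y hy
        obtain ⟨x, hxI, rfl⟩ := hVI hy
        exact ⟨x, ⟨hxI, hy⟩, rfl⟩
    have hVopen : IsOpen V := hV ▸ isOpen_Ioo
    have hUopen : IsOpen U := (mp.cont (w 0)).isOpen_inter_preimage isOpen_Ioo hVopen
    have hUne : U.Nonempty := by
      have : V.Nonempty := hV ▸ nonempty_Ioo.2 hcd
      obtain ⟨y, hy⟩ := this
      obtain ⟨x, hxI, rfl⟩ := hVI hy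
      exact ⟨x, hxI, hy⟩
    have hUconn : U.OrdConnected := by
      constructor
      rintro x hx y hy z hz
      have hzI : z ∈ I := Set.ordConnected_Ioo.out hx.1 hy.1 hz
      refine ⟨hzI, ?_⟩
      have hfx : f x ∈ Set.Ioo c d := hV ▸ hx.2
      have hfy : f y ∈ Set.Ioo c d := hV ▸ hy.2
      show f z ∈ V
      rw [hV]
      rcases mp.mono (w 0) with hm | hm
      · have h1 := (hm.monotoneOn) hx.1 hzI hz.1
        have h2 := (hm.monotoneOn) hzI hy.1 hz.2
        exact ⟨lt_of_lt_of_le hfx.1 h1, lt_of_le_of_lt h2 hfy.2⟩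
      · have h1 := (hm.antitoneOn) hx.1 hzI hz.1
        have h2 := (hm.antitoneOn) hzI hy.1 hz.2
        exact ⟨lt_of_lt_of_le hfy.1 h2, lt_of_le_of_lt h1 hfx.2⟩
    have hMaps : Set.MapsTo f U V := fun x hx => hx.2
    have hfcontU : ContinuousOn f U := (mp.cont (w 0)).mono hUI
    have hfinjU : Set.InjOn f U := by
      rcases mp.mono (w 0) with hm | hm
      · exact (hm.injOn).mono hUI
      · exact (hm.injOn).mono hUI
    rw [hU]
    refine ⟨open_ordConn_eq_Ioo U hUopen hUconn hUne (hUI.trans (mp.sub (w 0))), ?_, ?_⟩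
    · refine ⟨?_, ?_, ?_⟩
      · rw [Function.iterate_succ, Set.image_comp, hfU, himg]
      · rw [Function.iterate_succ]
        exact hcont.comp hfcontU hMaps
      · rw [Function.iterate_succ]
        exact hinj.comp hfinjU hMaps
    · rintro w' hadm' ⟨k, hk, hne⟩
      rw [cylSet_succ f mp n w']
      match k with
      | 0 =>
        exact Disjoint.mono inter_subset_left inter_subset_left
          (mp.disj (fun h => hne h.symm))
      | k + 1 =>
        have hd : Disjoint V (cylSet f mp n (fun j => w' (j + 1))) :=
          hdisj _ (fun j hj => hadm' (j + 1) (by omega)) ⟨k, by omega, hne⟩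
        exact Disjoint.mono inter_subset_right inter_subset_right (hd.preimage f)

/-- For a countably Markov interval map and a nonempty (admissible) cylinder
`[i₀ ⋯ iₙ]`, the set `U = i₀ ∩ f⁻¹(i₁) ∩ ⋯ ∩ f⁻ⁿ(iₙ)` is a nonempty open interval mapped
homeomorphically by `fⁿ` onto `iₙ`; and sets corresponding to distinct admissible cylinders
of the same length are disjoint. -/
theorem markov_cylinder_sets
    (f : ℝ → ℝ) (mp : CountMarkov f)
    (n : ℕ) (w : ℕ → mp.ι)
    (hadm : ∀ k < n, Set.Ioo (mp.a (w (k + 1))) (mp.b (w (k + 1))) ⊆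
      f '' Set.Ioo (mp.a (w k)) (mp.b (w k))) :
    (∃ c d : ℝ, c < d ∧ cylSet f mp n w = Set.Ioo c d) ∧
    MapsHomeoOnto (f^[n]) (cylSet f mp n w) (Set.Ioo (mp.a (w n)) (mp.b (w n))) ∧
    (∀ w' : ℕ → mp.ι,
      (∀ k < n, Set.Ioo (mp.a (w' (k + 1))) (mp.b (w' (k + 1))) ⊆
        f '' Set.Ioo (mp.a (w' k)) (mp.b (w' k))) →
      (∃ k ≤ n, w' k ≠ w k) →
      Disjoint (cylSet f mp n w) (cylSet f mp n w')) := markov_main f mp n w hadm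
end

section
/- Let f be a countably Markov and mixing interval map with transition matrix M. Then ([0,1], f) and the Markov shift (Σ_M, σ) are isomorphic modulo countable invariant sets: there are totally invariant countable sets D ⊂ [0,1] (the pre-partition points) and N ⊂ Σ_M (the false itineraries), and a bimeasurable bijection ψ : Σ_M∖N → [0,1]∖D with f∘ψ = ψ∘σ. -/
/-- Admissible itineraries: the symbolic space `Σ_M` of the Markov shift associated with the
Markov partition (`m i j = 1` iff `f(i) ⊇ j`). -/
def Adm (f : ℝ → ℝ) (mp : CountMarkov f) (w : ℕ → mp.ι) : Prop :=
  ∀ k : ℕ, Set.Ioo (mp.a (w (k + 1))) (mp.b (w (k + 1))) ⊆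
    f '' Set.Ioo (mp.a (w k)) (mp.b (w k))

/-- The shift map on `Σ_M`. -/
def mShift (f : ℝ → ℝ) (mp : CountMarkov f) :
    {w : ℕ → mp.ι // Adm f mp w} → {w : ℕ → mp.ι // Adm f mp w} :=
  fun ω => ⟨fun k => ω.1 (k + 1), fun k => ω.2 (k + 1)⟩

/-- Borel structure on the shift space (discrete structure on the countable alphabet). -/
instance (f : ℝ → ℝ) (mp : CountMarkov f) : MeasurableSpace {w : ℕ → mp.ι // Adm f mp w} :=
  @Subtype.instMeasurableSpace _ _ (@MeasurableSpace.pi _ _ (fun _ => ⊤))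

/-!
Points of `[0,1]` whose orbit avoids the partition points have an itinerary. Cylinders are
intervals on which the corresponding iterate of `f` is continuous and injective, and mixing
forbids an interval on which all iterates are; so two regular points never share an
itinerary and, the remaining points being countable, the closed cylinders of an admissible
word shrink to a single point `ψ ω`. Thus `ψ` inverts the itinerary map. A false itinerary
is sent to a pre-partition point, and a point has only countably many codings: the word whose
cylinders all contain it and, for each depth and side, at most one word whose cylinders lie on
that side of it from that depth on. The inverse of `ψ` is measurable by the Lusin–Souslin
theorem applied to the injective, measurable itinerary map.
-/

open Set Filter Function MeasureTheory

theorem Set.OrdConnected.subset_Iio_or_subset_Ioi {α : Type*} [LinearOrder α] {s : Set α}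
    {a : α} (hs : s.OrdConnected) (ha : a ∉ s) : s ⊆ Iio a ∨ s ⊆ Ioi a := by
  refine or_iff_not_imp_left.2 fun h x hx => ?_
  obtain ⟨p, hp, hpa⟩ := not_subset.1 h
  exact lt_of_not_ge fun hxa => ha (hs.out hx hp ⟨hxa, not_lt.1 hpa⟩)

theorem Set.OrdConnected.inter_nonempty_of_subset_Iio {α : Type*} [TopologicalSpace α]
    [LinearOrder α] [OrderTopology α] {s t : Set α} {a : α} (hs : s.OrdConnected)
    (hsne : s.Nonempty) (hsa : s ⊆ Iio a) (hta : t ⊆ Iio a) (has : a ∈ closure s)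
    (hat : a ∈ closure t) : (s ∩ t).Nonempty := by
  obtain ⟨p, hp⟩ := hsne
  obtain ⟨q, hq, hpq, -⟩ :=
    (isLUB_of_mem_closure (fun _ hx => (hta hx).le) hat).exists_between (hsa hp)
  obtain ⟨r, hr, hqr, -⟩ :=
    (isLUB_of_mem_closure (fun _ hx => (hsa hx).le) has).exists_between (hta hq)
  exact ⟨q, hs.out hp hr ⟨hpq.le, hqr.le⟩, hq⟩

theorem Set.OrdConnected.inter_nonempty_of_subset_Ioi {α : Type*} [TopologicalSpace α]
    [LinearOrder α] [OrderTopology α] {s t : Set α} {a : α} (hs : s.OrdConnected)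
    (hsne : s.Nonempty) (hsa : s ⊆ Ioi a) (hta : t ⊆ Ioi a) (has : a ∈ closure s)
    (hat : a ∈ closure t) : (s ∩ t).Nonempty := by
  obtain ⟨p, hp⟩ := hsne
  obtain ⟨q, hq, -, hqp⟩ :=
    (isGLB_of_mem_closure (fun _ hx => (hta hx).le) hat).exists_between (hsa hp)
  obtain ⟨r, hr, -, hrq⟩ :=
    (isGLB_of_mem_closure (fun _ hx => (hsa hx).le) has).exists_between (hta hq)
  exact ⟨q, hs.out hr hp ⟨hrq.le, hqp.le⟩, hq⟩

theorem Set.OrdConnected.subsingleton_of_countable {s : Set ℝ} (hs : s.OrdConnected)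
    (hc : s.Countable) : s.Subsingleton := by
  rw [← not_nontrivial_iff, nontrivial_iff_exists_lt]
  rintro ⟨x, hx, y, hy, hxy⟩
  exact (Cardinal.Real.Ioo_countable_iff.1
    (hc.mono (Ioo_subset_Icc_self.trans (hs.out hx hy)))).not_gt hxy

namespace MixingOn

variable {f : ℝ → ℝ}

theorem eventually_mem_image_iterate (hmix : MixingOn f) {U : Set ℝ} (hUo : IsOpen U)
    (hUc : IsPreconnected U) (hUI : U ⊆ Icc 0 1) (hU : U.Nonempty)
    (hcont : ∀ n, ContinuousOn f^[n] U) {t : ℝ} (ht : t ∈ Ioo 0 1) :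
    ∀ᶠ n in atTop, t ∈ f^[n] '' U := by
  have hUI' : U ∩ Icc 0 1 = U := inter_eq_left.2 hUI
  have meets : ∀ V : Set ℝ, IsOpen V → (V ∩ Icc 0 1).Nonempty →
      ∀ᶠ n in atTop, (f^[n] '' U ∩ V).Nonempty := fun V hV hVne => by
    obtain ⟨N, hN⟩ := hmix U V hUo hV (hUI'.symm ▸ hU) hVne
    exact eventually_atTop.2 ⟨N, fun n hn => by
      simpa only [hUI'] using (hN n hn).mono (inter_subset_inter_right _ inter_subset_left)⟩
  filter_upwards [meets _ isOpen_Iio ⟨0, ht.1, le_rfl, zero_le_one⟩,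
    meets _ isOpen_Ioi ⟨1, ht.2, zero_le_one, le_rfl⟩] with n ⟨p, hp, hpt⟩ ⟨q, hq, hqt⟩
  exact (hUc.image _ (hcont n)).Icc_subset hp hq ⟨le_of_lt hpt, le_of_lt hqt⟩

theorem exists_not_injOn_iterate (hmix : MixingOn f) {x y : ℝ} (hxy : x < y)
    (hI : Ioo x y ⊆ Icc 0 1) (hcont : ∀ n, ContinuousOn f^[n] (Ioo x y)) :
    ∃ n, ¬ InjOn f^[n] (Ioo x y) := by
  obtain ⟨c, hxc, hcy⟩ := exists_between hxy
  have hl : Ioo x c ⊆ Ioo x y := Ioo_subset_Ioo_right hcy.le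
  have hr : Ioo c y ⊆ Ioo x y := Ioo_subset_Ioo_left hxc.le
  have half : (1 / 2 : ℝ) ∈ Ioo 0 1 := by norm_num
  obtain ⟨n, ⟨u, hu, hun⟩, ⟨v, hv, hvn⟩⟩ :=
    ((hmix.eventually_mem_image_iterate isOpen_Ioo isPreconnected_Ioo (hl.trans hI)
      (nonempty_Ioo.2 hxc) (fun n => (hcont n).mono hl) half).and
    (hmix.eventually_mem_image_iterate isOpen_Ioo isPreconnected_Ioo (hr.trans hI)
      (nonempty_Ioo.2 hcy) (fun n => (hcont n).mono hr) half)).exists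
  exact ⟨n, fun hinj => (hu.2.trans hv.1).ne (hinj (hl hu) (hr hv) (hun.trans hvn.symm))⟩

end MixingOn

namespace CountMarkov

variable {f : ℝ → ℝ} (mp : CountMarkov f)

instance : Countable mp.ι := mp.countable

-- The discrete σ-algebra: with it `MeasurableSpace.pi` is the σ-algebra on `Σ_M` fixed above.
instance : MeasurableSpace mp.ι := ⊤

abbrev ShiftSpace : Type := {w : ℕ → mp.ι // Adm f mp w}

def piece (i : mp.ι) : Set ℝ := Ioo (mp.a i) (mp.b i)

def prePartitionPts : Set ℝ := (⋃ n : ℕ, f^[n] ⁻¹' mp.C) ∩ Icc 0 1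

def regularPts : Set ℝ := Icc 0 1 \ mp.prePartitionPts

def cylinder (w : ℕ → mp.ι) (n : ℕ) : Set ℝ :=
  {x | ∀ m ≤ n, f^[m] x ∈ mp.piece (w m)}

def limitSet (w : ℕ → mp.ι) : Set ℝ := ⋂ n, closure (mp.cylinder w n)

variable {mp}

section Partition

lemma isOpen_piece (i : mp.ι) : IsOpen (mp.piece i) := isOpen_Ioo

lemma ordConnected_piece (i : mp.ι) : (mp.piece i).OrdConnected := ordConnected_Ioo

lemma eq_of_mem_piece {i j : mp.ι} {x : ℝ} (hi : x ∈ mp.piece i) (hj : x ∈ mp.piece j) :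
    i = j :=
  mp.disj.eq (not_disjoint_iff.2 ⟨x, hi, hj⟩)

lemma closure_piece_subset (i : mp.ι) : closure (mp.piece i) ⊆ mp.piece i ∪ mp.C := by
  intro x hx
  by_cases hxi : x ∈ mp.piece i
  · exact Or.inl hxi
  rcases mp.cover (closure_minimal (mp.sub i) isClosed_Icc hx) with hx' | hxC
  · obtain ⟨j, hj⟩ := mem_iUnion.1 hx'
    obtain ⟨y, hyj, hyi⟩ := mem_closure_iff.1 hx _ (isOpen_piece j) hj
    obtain rfl := eq_of_mem_piece hyi hyj
    exact absurd hj hxi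
  · exact Or.inr hxC

lemma exists_mem_piece {x : ℝ} (hx : x ∈ Icc 0 1) (hxC : x ∉ mp.C) :
    ∃ i, x ∈ mp.piece i :=
  mem_iUnion.1 ((mp.cover hx).resolve_right hxC)

lemma injOn_piece (i : mp.ι) : InjOn f (mp.piece i) :=
  (mp.mono i).elim StrictMonoOn.injOn StrictAntiOn.injOn

lemma mapsTo_uIcc_of_mem_piece {i : mp.ι} {x y : ℝ} (hx : x ∈ mp.piece i)
    (hy : y ∈ mp.piece i) : MapsTo f (uIcc x y) (uIcc (f x) (f y)) := by
  have hsub : uIcc x y ⊆ mp.piece i := (ordConnected_piece i).uIcc_subset hx hy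
  rcases mp.mono i with h | h
  · exact (h.monotoneOn.mono hsub).mapsTo_uIcc
  · exact (h.antitoneOn.mono hsub).mapsTo_uIcc

end Partition

section PrePartition

lemma countable_preimage_inter_Icc (mp : CountMarkov f) {A : Set ℝ} (hA : A.Countable) :
    (f ⁻¹' A ∩ Icc 0 1).Countable := by
  have hpiece : ∀ i, (mp.piece i ∩ f ⁻¹' A).Countable := fun i =>
    (mapsTo_preimage f A).mono_left inter_subset_right |>.countable_of_injOn
      ((injOn_piece i).mono inter_subset_left) hA
  refine (mp.C_cnt.union (countable_iUnion hpiece)).mono fun x ⟨hxA, hx⟩ => ?_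
  by_cases hxC : x ∈ mp.C
  · exact Or.inl hxC
  · obtain ⟨i, hi⟩ := exists_mem_piece hx hxC
    exact Or.inr (mem_iUnion.2 ⟨i, hi, hxA⟩)

lemma countable_prePartitionPts : mp.prePartitionPts.Countable := by
  rw [prePartitionPts, iUnion_inter]
  refine countable_iUnion fun n => ?_
  induction n with
  | zero => exact mp.C_cnt.mono inter_subset_left
  | succ n ih =>
    refine (countable_preimage_inter_Icc mp ih).mono ?_
    rintro x ⟨hx, hxI⟩
    exact ⟨⟨by rwa [mem_preimage, ← iterate_succ_apply], mp.mapsTo hxI⟩, hxI⟩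

lemma preimage_prePartitionPts : f ⁻¹' mp.prePartitionPts ∩ Icc 0 1 = mp.prePartitionPts := by
  ext x
  simp only [prePartitionPts, mem_inter_iff, mem_preimage, mem_iUnion]
  constructor
  · rintro ⟨⟨⟨n, hn⟩, -⟩, hx⟩
    exact ⟨⟨n + 1, by rwa [iterate_succ_apply]⟩, hx⟩
  · rintro ⟨⟨n, hn⟩, hx⟩
    refine ⟨⟨?_, mp.mapsTo hx⟩, hx⟩
    cases n with
    | zero => exact ⟨0, mp.fwdC (mem_image_of_mem f hn)⟩
    | succ n => exact ⟨n, by rwa [← iterate_succ_apply]⟩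

lemma measurableSet_regularPts : MeasurableSet mp.regularPts :=
  measurableSet_Icc.diff countable_prePartitionPts.measurableSet

lemma mem_regularPts_iff {x : ℝ} :
    x ∈ mp.regularPts ↔ x ∈ Icc 0 1 ∧ f x ∈ mp.regularPts := by
  have hD : x ∈ mp.prePartitionPts ↔ f x ∈ mp.prePartitionPts ∧ x ∈ Icc 0 1 :=
    (Set.ext_iff.1 preimage_prePartitionPts x).symm
  exact ⟨fun ⟨hx, hxD⟩ => ⟨hx, mp.mapsTo hx, fun hfx => hxD (hD.2 ⟨hfx, hx⟩)⟩,
    fun ⟨hx, _, hfx⟩ => ⟨hx, fun hxD => hfx (hD.1 hxD).1⟩⟩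

lemma mapsTo_regularPts : MapsTo f mp.regularPts mp.regularPts :=
  fun _ hx => (mem_regularPts_iff.1 hx).2

lemma iterate_notMem_C {x : ℝ} (hx : x ∈ mp.regularPts) (k : ℕ) : f^[k] x ∉ mp.C :=
  fun h => hx.2 ⟨mem_iUnion.2 ⟨k, h⟩, hx.1⟩

lemma exists_iterate_mem_piece {x : ℝ} (hx : x ∈ mp.regularPts) (k : ℕ) :
    ∃ i, f^[k] x ∈ mp.piece i :=
  exists_mem_piece (mapsTo_regularPts.iterate k hx).1 (iterate_notMem_C hx k)

end PrePartition

section Cylinder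

variable {w : ℕ → mp.ι} {m n : ℕ} {x y z : ℝ}

lemma cylinder_anti (h : m ≤ n) : mp.cylinder w n ⊆ mp.cylinder w m :=
  fun _ hx k hk => hx k (hk.trans h)

lemma cylinder_subset_Icc : mp.cylinder w n ⊆ Icc 0 1 :=
  fun _ hx => mp.sub (w 0) (hx 0 n.zero_le)

lemma mapsTo_iterate_cylinder (hm : m ≤ n) : MapsTo f^[m] (mp.cylinder w n) (mp.piece (w m)) :=
  fun _ hx => hx m hm

lemma continuousOn_iterate_cylinder (hm : m ≤ n + 1) : ContinuousOn f^[m] (mp.cylinder w n) := by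
  induction m with
  | zero => exact continuousOn_id
  | succ m ih =>
    rw [iterate_succ']
    exact (mp.cont (w m)).comp (ih (by omega)) (mapsTo_iterate_cylinder (by omega))

lemma injOn_iterate_cylinder (hm : m ≤ n + 1) : InjOn f^[m] (mp.cylinder w n) := by
  induction m with
  | zero => exact injOn_id _
  | succ m ih =>
    rw [iterate_succ']
    exact (injOn_piece (w m)).comp (ih (by omega)) (mapsTo_iterate_cylinder (by omega))

lemma mapsTo_iterate_uIcc (hx : x ∈ mp.cylinder w n) (hy : y ∈ mp.cylinder w n)
    (hm : m ≤ n + 1) : MapsTo f^[m] (uIcc x y) (uIcc (f^[m] x) (f^[m] y)) := by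
  induction m with
  | zero => exact mapsTo_id _
  | succ m ih =>
    rw [iterate_succ']
    exact (mapsTo_uIcc_of_mem_piece (hx m (by omega)) (hy m (by omega))).comp (ih (by omega))

lemma ordConnected_cylinder : (mp.cylinder w n).OrdConnected := by
  refine ordConnected_iff_uIcc_subset.2 ?_
  intro x hx y hy z hz m hm
  exact (ordConnected_piece _).uIcc_subset (hx m hm) (hy m hm)
    (mapsTo_iterate_uIcc hx hy (by omega) hz)

lemma nonempty_cylinder (hw : Adm f mp w) (n : ℕ) : (mp.cylinder w n).Nonempty := by
  induction n generalizing w with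
  | zero =>
    obtain ⟨x, hx⟩ := nonempty_Ioo.2 (mp.lt (w 0))
    exact ⟨x, fun m hm => by rwa [Nat.le_zero.1 hm]⟩
  | succ n ih =>
    obtain ⟨y, hy⟩ := ih (w := fun k => w (k + 1)) fun k => hw (k + 1)
    obtain ⟨x, hx, rfl⟩ := hw 0 (hy 0 n.zero_le)
    refine ⟨x, fun m hm => ?_⟩
    cases m with
    | zero => exact hx
    | succ m => rw [iterate_succ_apply]; exact hy m (by omega)

lemma eq_of_forall_inter_cylinder_nonempty {w' : ℕ → mp.ι}
    (h : ∀ n, (mp.cylinder w n ∩ mp.cylinder w' n).Nonempty) : w = w' :=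
  funext fun n =>
    let ⟨_, hx, hx'⟩ := h n
    eq_of_mem_piece (hx n le_rfl) (hx' n le_rfl)

lemma subsingleton_iInter_cylinder (hmix : MixingOn f) (w : ℕ → mp.ι) :
    (⋂ n, mp.cylinder w n).Subsingleton := by
  rw [← not_nontrivial_iff, nontrivial_iff_exists_lt]
  rintro ⟨x, hx, y, hy, hxy⟩
  have hsub : ∀ n, Ioo x y ⊆ mp.cylinder w n := fun n =>
    Ioo_subset_Icc_self.trans (ordConnected_cylinder.out (mem_iInter.1 hx n) (mem_iInter.1 hy n))
  obtain ⟨n, hn⟩ := hmix.exists_not_injOn_iterate hxy ((hsub 0).trans cylinder_subset_Icc)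
    fun n => (continuousOn_iterate_cylinder n.le_succ).mono (hsub n)
  exact hn ((injOn_iterate_cylinder n.le_succ).mono (hsub n))

lemma nonempty_limitSet (hw : Adm f mp w) : (mp.limitSet w).Nonempty :=
  IsCompact.nonempty_iInter_of_sequence_nonempty_isCompact_isClosed _
    (fun n => closure_mono (cylinder_anti n.le_succ)) (fun n => (nonempty_cylinder hw n).closure)
    (isCompact_Icc.closure_of_subset cylinder_subset_Icc) fun _ => isClosed_closure

lemma limitSet_subset_Icc : mp.limitSet w ⊆ Icc 0 1 :=
  (iInter_subset _ 0).trans (closure_minimal cylinder_subset_Icc isClosed_Icc)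

lemma ordConnected_limitSet : (mp.limitSet w).OrdConnected :=
  ordConnected_iInter fun _ => ordConnected_cylinder.isPreconnected.closure.ordConnected

lemma iterate_mem_piece_of_mem_closure (hz : z ∈ closure (mp.cylinder w m))
    (hzC : f^[m] z ∉ mp.C) (hcont : ContinuousWithinAt f^[m] (mp.cylinder w m) z) :
    f^[m] z ∈ mp.piece (w m) :=
  (closure_piece_subset _ (closure_mono (mapsTo_iterate_cylinder le_rfl).image_subset
    (hcont.mem_closure_image hz))).resolve_right hzC

lemma mem_cylinder_of_mem_limitSet (hz : z ∈ mp.limitSet w) (hzC : ∀ k, f^[k] z ∉ mp.C)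
    (n : ℕ) : z ∈ mp.cylinder w n := by
  induction n with
  | zero =>
    intro m hm
    obtain rfl := Nat.le_zero.1 hm
    exact iterate_mem_piece_of_mem_closure (mem_iInter.1 hz 0) (hzC 0) continuousWithinAt_id
  | succ n ih =>
    intro m hm
    rcases Nat.le_succ_iff.1 hm with hm | rfl
    · exact ih m hm
    · exact iterate_mem_piece_of_mem_closure (mem_iInter.1 hz _) (hzC _)
        (((continuousOn_iterate_cylinder le_rfl) z ih).mono (cylinder_anti n.le_succ))

lemma subsingleton_limitSet (hmix : MixingOn f) (w : ℕ → mp.ι) :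
    (mp.limitSet w).Subsingleton := by
  have hreg : (mp.limitSet w ∩ mp.regularPts).Subsingleton :=
    (subsingleton_iInter_cylinder hmix w).anti fun z hz =>
      mem_iInter.2 (mem_cylinder_of_mem_limitSet hz.1 (iterate_notMem_C hz.2))
  refine ordConnected_limitSet.subsingleton_of_countable
    ((hreg.countable.union (countable_prePartitionPts (mp := mp))).mono fun z hz => ?_)
  by_cases hzD : z ∈ mp.prePartitionPts
  · exact Or.inr hzD
  · exact Or.inl ⟨hz, limitSet_subset_Icc hz, hzD⟩

end Cylinder

section Coding

variable (mp) in
noncomputable def point (ω : mp.ShiftSpace) : ℝ := (nonempty_limitSet ω.2).choose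

variable (mp) in
noncomputable def itinerary (x : mp.regularPts) (k : ℕ) : mp.ι :=
  (exists_iterate_mem_piece x.2 k).choose

lemma point_mem_limitSet (ω : mp.ShiftSpace) : mp.point ω ∈ mp.limitSet ω.1 :=
  (nonempty_limitSet ω.2).choose_spec

lemma itinerary_eq_iff_mem_piece {x : mp.regularPts} {k : ℕ} {i : mp.ι} :
    mp.itinerary x k = i ↔ f^[k] x ∈ mp.piece i :=
  ⟨fun h => h ▸ (exists_iterate_mem_piece x.2 k).choose_spec,
    eq_of_mem_piece (exists_iterate_mem_piece x.2 k).choose_spec⟩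

lemma itinerary_eq_iff {x : mp.regularPts} {w : ℕ → mp.ι} :
    mp.itinerary x = w ↔ ∀ n, (x : ℝ) ∈ mp.cylinder w n :=
  ⟨by rintro rfl n m -; exact itinerary_eq_iff_mem_piece.1 rfl,
    fun h => funext fun k => itinerary_eq_iff_mem_piece.2 (h k k le_rfl)⟩

lemma adm_itinerary (x : mp.regularPts) : Adm f mp (mp.itinerary x) := by
  intro k
  have hmem :
      f^[k + 1] x ∈ f '' mp.piece (mp.itinerary x k) ∩ mp.piece (mp.itinerary x (k + 1)) :=
    ⟨iterate_succ_apply' f k x ▸ mem_image_of_mem f (itinerary_eq_iff_mem_piece.1 rfl),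
      itinerary_eq_iff_mem_piece.1 rfl⟩
  exact (mp.markov _ _).resolve_right fun h => eq_empty_iff_forall_notMem.1 h _ hmem

variable (mp) in
noncomputable def code (x : mp.regularPts) : mp.ShiftSpace := ⟨mp.itinerary x, adm_itinerary x⟩

variable (mp) in
def regularMap : mp.regularPts → mp.regularPts := mapsTo_regularPts.restrict f _ _

lemma code_eq_of_mem_limitSet {x : mp.regularPts} {ω : mp.ShiftSpace}
    (hx : (x : ℝ) ∈ mp.limitSet ω.1) : mp.code x = ω :=
  Subtype.ext (itinerary_eq_iff.2 (mem_cylinder_of_mem_limitSet hx (iterate_notMem_C x.2)))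

lemma point_code (hmix : MixingOn f) (x : mp.regularPts) : mp.point (mp.code x) = x :=
  subsingleton_limitSet hmix _ (point_mem_limitSet _)
    (mem_iInter.2 fun n => subset_closure (itinerary_eq_iff.1 rfl n))

lemma code_injective (hmix : MixingOn f) : Injective mp.code := fun x y h =>
  Subtype.ext ((point_code hmix x).symm.trans ((congrArg mp.point h).trans (point_code hmix y)))

lemma code_regularMap (x : mp.regularPts) :
    mp.code (mp.regularMap x) = mShift f mp (mp.code x) :=
  Subtype.ext (itinerary_eq_iff.2 fun _ m _ => by
    rw [regularMap, MapsTo.val_restrict_apply, ← iterate_succ_apply]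
    exact itinerary_eq_iff_mem_piece.1 rfl)

lemma preimage_mShift_range_code : mShift f mp ⁻¹' range mp.code = range mp.code := by
  ext ω
  refine ⟨fun ⟨y, hy⟩ => ?_,
    fun ⟨x, hx⟩ => ⟨mp.regularMap x, hx ▸ code_regularMap x⟩⟩
  have hyω : ∀ n, (y : ℝ) ∈ mp.cylinder (fun k => ω.1 (k + 1)) n :=
    itinerary_eq_iff.1 (congrArg Subtype.val hy)
  obtain ⟨x, hx, hxy⟩ := ω.2 0 (hyω 0 0 le_rfl)
  have hxreg : x ∈ mp.regularPts := mem_regularPts_iff.2 ⟨mp.sub _ hx, hxy ▸ y.2⟩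
  refine ⟨⟨x, hxreg⟩, Subtype.ext (itinerary_eq_iff.2 fun n m hm => ?_)⟩
  cases m with
  | zero => exact hx
  | succ m =>
    rw [iterate_succ_apply, hxy]
    exact hyω n m (by omega)

lemma point_mShift (hmix : MixingOn f) {ω : mp.ShiftSpace} (hω : ω ∈ range mp.code) :
    mp.point (mShift f mp ω) = f (mp.point ω) := by
  obtain ⟨x, rfl⟩ := hω
  rw [← code_regularMap, point_code hmix, point_code hmix]
  rfl

lemma bijOn_point (hmix : MixingOn f) : BijOn mp.point (range mp.code) mp.regularPts := by
  refine ⟨?_, ?_, fun x hx => ⟨mp.code ⟨x, hx⟩, mem_range_self _, point_code hmix _⟩⟩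
  · rintro _ ⟨x, rfl⟩
    rw [point_code hmix]
    exact x.2
  · rintro _ ⟨x, rfl⟩ _ ⟨y, rfl⟩ h
    rw [point_code hmix, point_code hmix] at h
    rw [Subtype.ext h]

end Coding

section FalseItineraries

lemma point_mem_prePartitionPts {ω : mp.ShiftSpace} (hω : ω ∉ range mp.code) :
    mp.point ω ∈ mp.prePartitionPts := by
  by_contra hD
  exact hω ⟨⟨mp.point ω, limitSet_subset_Icc (point_mem_limitSet ω), hD⟩,
    code_eq_of_mem_limitSet (point_mem_limitSet ω)⟩

variable (mp) in
def sideFiber (d : ℝ) (m : ℕ) (S : Set ℝ) : Set mp.ShiftSpace :=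
  {ω | mp.point ω = d ∧ (∀ k < m, d ∈ mp.cylinder ω.1 k) ∧ mp.cylinder ω.1 m ⊆ S}

lemma subsingleton_sideFiber {d : ℝ} {m : ℕ} {S : Set ℝ} (hS : S = Iio d ∨ S = Ioi d) :
    (mp.sideFiber d m S).Subsingleton := by
  rintro ω ⟨hω, hωd, hωS⟩ ω' ⟨hω', hωd', hωS'⟩
  refine Subtype.ext (eq_of_forall_inter_cylinder_nonempty fun n => ?_)
  rcases lt_or_ge n m with hn | hn
  · exact ⟨d, hωd n hn, hωd' n hn⟩
  have hsub := (cylinder_anti hn).trans hωS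
  have hsub' := (cylinder_anti hn).trans hωS'
  have hcl := hω ▸ mem_iInter.1 (point_mem_limitSet ω) n
  have hcl' := hω' ▸ mem_iInter.1 (point_mem_limitSet ω') n
  rcases hS with rfl | rfl
  · exact ordConnected_cylinder.inter_nonempty_of_subset_Iio (nonempty_cylinder ω.2 n)
      hsub hsub' hcl hcl'
  · exact ordConnected_cylinder.inter_nonempty_of_subset_Ioi (nonempty_cylinder ω.2 n)
      hsub hsub' hcl hcl'

lemma point_preimage_singleton_subset (d : ℝ) :
    mp.point ⁻¹' {d} ⊆ {ω | ∀ n, d ∈ mp.cylinder ω.1 n} ∪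
      ⋃ m, (mp.sideFiber d m (Iio d) ∪ mp.sideFiber d m (Ioi d)) := by
  classical
  intro ω hω
  by_cases hall : ∀ n, d ∈ mp.cylinder ω.1 n
  · exact Or.inl hall
  push Not at hall
  have hbelow : ∀ k < Nat.find hall, d ∈ mp.cylinder ω.1 k := fun k hk =>
    not_not.1 (Nat.find_min hall hk)
  refine Or.inr (mem_iUnion.2 ⟨Nat.find hall, ?_⟩)
  exact (ordConnected_cylinder.subset_Iio_or_subset_Ioi (Nat.find_spec hall)).imp
    (fun h => ⟨hω, hbelow, h⟩) fun h => ⟨hω, hbelow, h⟩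

lemma countable_point_preimage_singleton (d : ℝ) : (mp.point ⁻¹' {d}).Countable := by
  refine Countable.mono (point_preimage_singleton_subset d) (Countable.union ?_ ?_)
  · refine Subsingleton.countable fun ω hω ω' hω' => Subtype.ext ?_
    exact eq_of_forall_inter_cylinder_nonempty fun n => ⟨d, hω n, hω' n⟩
  · exact countable_iUnion fun m => (subsingleton_sideFiber (Or.inl rfl)).countable.union
      (subsingleton_sideFiber (Or.inr rfl)).countable

lemma countable_compl_range_code : (range mp.code)ᶜ.Countable :=
  (countable_prePartitionPts.biUnion fun d _ => countable_point_preimage_singleton d).mono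
    fun _ hω => mem_biUnion (point_mem_prePartitionPts hω) (mem_singleton _)

end FalseItineraries

section Measurability

lemma measurable_regularMap : Measurable mp.regularMap := by
  refine (measurable_of_isOpen fun U hU => ?_).subtype_mk
  have hpre : (fun x : mp.regularPts => f x) ⁻¹' U =
      Subtype.val ⁻¹' ⋃ i, mp.piece i ∩ f ⁻¹' U := by
    ext x
    obtain ⟨i, hi⟩ := exists_iterate_mem_piece x.2 0
    simp only [mem_preimage, mem_iUnion, mem_inter_iff]
    exact ⟨fun h => ⟨i, hi, h⟩, fun ⟨_, _, h⟩ => h⟩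
  rw [hpre]
  exact measurable_subtype_coe (MeasurableSet.iUnion fun i =>
    ((mp.cont i).isOpen_inter_preimage (isOpen_piece i) hU).measurableSet)

lemma measurable_iterate_coe (k : ℕ) : Measurable fun x : mp.regularPts => f^[k] x := by
  induction k with
  | zero => exact measurable_subtype_coe
  | succ k ih =>
    simp only [iterate_succ_apply]
    exact ih.comp measurable_regularMap

lemma measurable_code : Measurable mp.code := by
  refine (measurable_pi_lambda _ fun k => measurable_to_countable' fun i => ?_).subtype_mk
  have hfib : (fun y => mp.itinerary y k) ⁻¹' {i} =
      (fun y : mp.regularPts => f^[k] y) ⁻¹' mp.piece i :=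
    ext fun y => itinerary_eq_iff_mem_piece
  rw [hfib]
  exact measurable_iterate_coe k (isOpen_piece _).measurableSet

lemma measurableEmbedding_code (hmix : MixingOn f) : MeasurableEmbedding mp.code :=
  haveI := measurableSet_regularPts (mp := mp).standardBorel
  measurable_code.measurableEmbedding (code_injective hmix)

lemma measurableSet_range_code_inter_preimage_point (hmix : MixingOn f) {B : Set ℝ}
    (hB : MeasurableSet B) : MeasurableSet (range mp.code ∩ mp.point ⁻¹' B) := by
  rw [inter_comm, ← image_preimage_eq_inter_range, ← preimage_comp,
    show mp.point ∘ mp.code = Subtype.val from funext (point_code hmix)]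
  exact (measurableEmbedding_code hmix).measurableSet_image.2 (measurable_subtype_coe hB)

lemma measurableSet_image_point_inter_range_code (hmix : MixingOn f) {A : Set mp.ShiftSpace}
    (hA : MeasurableSet A) : MeasurableSet (mp.point '' (A ∩ range mp.code)) := by
  rw [← image_preimage_eq_inter_range, image_image, funext (point_code hmix)]
  exact measurableSet_regularPts.subtype_image (measurable_code hA)

end Measurability

end CountMarkov

/-- A countably Markov and mixing interval map `f` with transition matrix `M` is
isomorphic modulo countable invariant sets to the Markov shift `(Σ_M, σ)`: there are a
totally invariant countable set `N ⊆ Σ_M` (the false itineraries) and a map `ψ` such that,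
with `D = ⋃ₙ f⁻ⁿ(C) ∩ [0,1]` the (countable, totally invariant) set of pre-partition points,
`ψ` is a bimeasurable bijection from `Σ_M ∖ N` onto `[0,1] ∖ D` with `f ∘ ψ = ψ ∘ σ`. -/
theorem markov_shift_isomorphism
    (f : ℝ → ℝ) (mp : CountMarkov f) (hmix : MixingOn f) :
    ∃ (N : Set {w : ℕ → mp.ι // Adm f mp w}) (ψ : {w : ℕ → mp.ι // Adm f mp w} → ℝ),
      N.Countable ∧ mShift f mp ⁻¹' N = N ∧
      ((⋃ n : ℕ, f^[n] ⁻¹' mp.C) ∩ Set.Icc 0 1).Countable ∧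
      f ⁻¹' ((⋃ n : ℕ, f^[n] ⁻¹' mp.C) ∩ Set.Icc 0 1) ∩ Set.Icc 0 1 =
        (⋃ n : ℕ, f^[n] ⁻¹' mp.C) ∩ Set.Icc 0 1 ∧
      Set.BijOn ψ Nᶜ (Set.Icc 0 1 \ ((⋃ n : ℕ, f^[n] ⁻¹' mp.C) ∩ Set.Icc 0 1)) ∧
      (∀ ω ∉ N, ψ (mShift f mp ω) = f (ψ ω)) ∧
      (∀ B : Set ℝ, MeasurableSet B → MeasurableSet (Nᶜ ∩ ψ ⁻¹' B)) ∧
      (∀ A : Set {w : ℕ → mp.ι // Adm f mp w}, MeasurableSet A →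
        MeasurableSet (ψ '' (A ∩ Nᶜ))) := by
  open CountMarkov in
  exact ⟨(range mp.code)ᶜ, mp.point, countable_compl_range_code,
    by rw [preimage_compl, preimage_mShift_range_code], countable_prePartitionPts,
    preimage_prePartitionPts, (compl_compl (range mp.code)).symm ▸ bijOn_point hmix,
    fun _ hω => point_mShift hmix (notMem_compl_iff.1 hω),
    fun _ hB => (compl_compl (range mp.code)).symm ▸
      measurableSet_range_code_inter_preimage_point hmix hB,
    fun _ hA => (compl_compl (range mp.code)).symm ▸
      measurableSet_image_point_inter_range_code hmix hA⟩
end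

section
/- In a countably Markov and mixing interval map, each pre-partition point x ∈ D = ∪_{n≥0} f⁻ⁿ(C) has at most two false itineraries; in particular the itinerary map ψ from the shift space to the interval is at most two-to-one over D. -/
namespace AtMostTwoAux

/-- The cylinder set of depth `n` for an itinerary `w`. -/
def US (f : ℝ → ℝ) (mp : CountMarkov f) (w : ℕ → mp.ι) (n : ℕ) : Set ℝ :=
  ⋂ k ∈ Finset.range (n + 1), f^[k] ⁻¹' Set.Ioo (mp.a (w k)) (mp.b (w k))

lemma mem_US {f : ℝ → ℝ} {mp : CountMarkov f} {w : ℕ → mp.ι} {n : ℕ} {z : ℝ} :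
    z ∈ US f mp w n ↔ ∀ k ≤ n, f^[k] z ∈ Set.Ioo (mp.a (w k)) (mp.b (w k)) := by
  simp [US, Nat.lt_succ_iff]

lemma US_anti {f : ℝ → ℝ} {mp : CountMarkov f} {w : ℕ → mp.ι} {m n : ℕ} (h : m ≤ n) :
    US f mp w n ⊆ US f mp w m := by
  intro z hz
  rw [mem_US] at hz ⊢
  exact fun k hk => hz k (hk.trans h)

lemma key {f : ℝ → ℝ} (mp : CountMarkov f) (w : ℕ → mp.ι) (n : ℕ) {y1 y2 y3 : ℝ}
    (h1 : y1 ∈ US f mp w n) (h3 : y3 ∈ US f mp w n) (h12 : y1 ≤ y2) (h23 : y2 ≤ y3) :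
    ∀ k ≤ n, f^[k] y2 ∈ Set.uIcc (f^[k] y1) (f^[k] y3) ∧
      f^[k] y2 ∈ Set.Ioo (mp.a (w k)) (mp.b (w k)) := by
  intro k
  induction k with
  | zero =>
    intro _
    refine ⟨?_, ?_⟩
    · simpa using Set.mem_uIcc.mpr (Or.inl ⟨h12, h23⟩)
    · exact Set.ordConnected_Ioo.out ((mem_US.mp h1) 0 (Nat.zero_le _))
        ((mem_US.mp h3) 0 (Nat.zero_le _)) ⟨h12, h23⟩
  | succ k ih =>
    intro hk1
    have hk : k ≤ n := Nat.le_of_succ_le hk1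
    obtain ⟨hu, hmem⟩ := ih hk
    have t1mem := (mem_US.mp h1) k hk
    have t3mem := (mem_US.mp h3) k hk
    have ft1mem := (mem_US.mp h1) (k + 1) hk1
    have ft3mem := (mem_US.mp h3) (k + 1) hk1
    simp only [Function.iterate_succ_apply'] at ft1mem ft3mem ⊢
    have hmain : f (f^[k] y2) ∈ Set.uIcc (f (f^[k] y1)) (f (f^[k] y3)) := by
      rcases mp.mono (w k) with hmono | hanti <;>
        rcases le_total (f^[k] y1) (f^[k] y3) with hle | hle
      · rw [Set.uIcc_of_le hle] at hu
        exact Set.mem_uIcc.mpr (Or.inl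
          ⟨(hmono.monotoneOn) t1mem hmem hu.1, (hmono.monotoneOn) hmem t3mem hu.2⟩)
      · rw [Set.uIcc_of_ge hle] at hu
        exact Set.mem_uIcc.mpr (Or.inr
          ⟨(hmono.monotoneOn) t3mem hmem hu.1, (hmono.monotoneOn) hmem t1mem hu.2⟩)
      · rw [Set.uIcc_of_le hle] at hu
        exact Set.mem_uIcc.mpr (Or.inr
          ⟨(hanti.antitoneOn) hmem t3mem hu.2, (hanti.antitoneOn) t1mem hmem hu.1⟩)
      · rw [Set.uIcc_of_ge hle] at hu
        exact Set.mem_uIcc.mpr (Or.inl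
          ⟨(hanti.antitoneOn) hmem t1mem hu.2, (hanti.antitoneOn) t3mem hmem hu.1⟩)
    exact ⟨hmain, Set.ordConnected_Ioo.uIcc_subset ft1mem ft3mem hmain⟩

lemma US_ordConnected {f : ℝ → ℝ} (mp : CountMarkov f) (w : ℕ → mp.ι) (n : ℕ) :
    (US f mp w n).OrdConnected := by
  constructor
  intro y1 h1 y3 h3 y2 hy2
  rw [mem_US]
  exact fun k hk => (key mp w n h1 h3 hy2.1 hy2.2 k hk).2

lemma inter_nonempty_Ioi {x : ℝ} {U V : Set ℝ} (hU : U.OrdConnected) (hV : V.OrdConnected)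
    (hxU : x ∈ closure U) (hxV : x ∈ closure V)
    (hU' : U ⊆ Set.Ioi x) (hV' : V ⊆ Set.Ioi x) : (U ∩ V).Nonempty := by
  obtain ⟨y, hy⟩ : V.Nonempty := closure_nonempty_iff.mp ⟨x, hxV⟩
  have hyx : x < y := hV' hy
  obtain ⟨z, hzU, hz⟩ := Metric.mem_closure_iff.mp hxU (y - x) (by linarith)
  have hzx : x < z := hU' hzU
  have hzy : z < y := by
    have h := abs_lt.mp (by simpa [Real.dist_eq] using hz)
    linarith [h.1]
  obtain ⟨w, hwV, hw⟩ := Metric.mem_closure_iff.mp hxV (z - x) (by linarith)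
  have hwx : x < w := hV' hwV
  have hwz : w < z := by
    have h := abs_lt.mp (by simpa [Real.dist_eq] using hw)
    linarith [h.1]
  exact ⟨z, hzU, hV.out hwV hy ⟨hwz.le, hzy.le⟩⟩

lemma inter_nonempty_Iio {x : ℝ} {U V : Set ℝ} (hU : U.OrdConnected) (hV : V.OrdConnected)
    (hxU : x ∈ closure U) (hxV : x ∈ closure V)
    (hU' : U ⊆ Set.Iio x) (hV' : V ⊆ Set.Iio x) : (U ∩ V).Nonempty := by
  obtain ⟨y, hy⟩ : V.Nonempty := closure_nonempty_iff.mp ⟨x, hxV⟩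
  have hyx : y < x := hV' hy
  obtain ⟨z, hzU, hz⟩ := Metric.mem_closure_iff.mp hxU (x - y) (by linarith)
  have hzx : z < x := hU' hzU
  have hzy : y < z := by
    have h := abs_lt.mp (by simpa [Real.dist_eq] using hz)
    linarith [h.2]
  obtain ⟨w, hwV, hw⟩ := Metric.mem_closure_iff.mp hxV (x - z) (by linarith)
  have hwx : w < x := hV' hwV
  have hwz : z < w := by
    have h := abs_lt.mp (by simpa [Real.dist_eq] using hw)
    linarith [h.2]
  exact ⟨z, hzU, hV.out hy hwV ⟨hzy.le, hwz.le⟩⟩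

end AtMostTwoAux

/-- In a countably Markov and mixing interval map, each pre-partition point
`x ∈ D = ⋃ₙ f⁻ⁿ(C)` has at most two (necessarily false) itineraries: the set of admissible
`ω ∈ Σ_M` with `x ∈ ⋂ₙ cl(i₀ ∩ f⁻¹(i₁) ∩ ⋯ ∩ f⁻ⁿ(iₙ))` has at most two elements; in
particular the itinerary map `ψ` is at most two-to-one over `D`. -/
theorem at_most_two_false_itineraries
    (f : ℝ → ℝ) (mp : CountMarkov f) (hmix : MixingOn f)
    (x : ℝ) (hx : x ∈ Set.Icc (0 : ℝ) 1) (hxD : ∃ n : ℕ, f^[n] x ∈ mp.C) :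
    {ω : {w : ℕ → mp.ι // Adm f mp w} |
      ∀ n : ℕ, x ∈ closure
        (⋂ k ∈ Finset.range (n + 1),
          f^[k] ⁻¹' Set.Ioo (mp.a (ω.1 k)) (mp.b (ω.1 k)))}.encard ≤ 2 := by
  classical
  obtain ⟨m, hm⟩ := hxD
  set S := {ω : {w : ℕ → mp.ι // Adm f mp w} |
      ∀ n : ℕ, x ∈ closure
        (⋂ k ∈ Finset.range (n + 1),
          f^[k] ⁻¹' Set.Ioo (mp.a (ω.1 k)) (mp.b (ω.1 k)))} with hS
  have hxcl : ∀ ω ∈ S, ∀ n : ℕ, x ∈ closure (AtMostTwoAux.US f mp ω.1 n) := by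
    intro ω hω n
    exact hω n
  have hnotin : ∀ (ω : {w : ℕ → mp.ι // Adm f mp w}) (n : ℕ), m ≤ n →
      x ∉ AtMostTwoAux.US f mp ω.1 n := by
    intro ω n hn hxU
    exact Set.disjoint_left.mp (mp.disjC (ω.1 m)) ((AtMostTwoAux.mem_US.mp hxU) m hn) hm
  have hside : ∀ ω ∈ S, AtMostTwoAux.US f mp ω.1 m ⊆ Set.Iio x ∨
      AtMostTwoAux.US f mp ω.1 m ⊆ Set.Ioi x := by
    intro ω hω
    have hx_not : x ∉ AtMostTwoAux.US f mp ω.1 m := hnotin ω m le_rfl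
    by_cases h : ∃ u ∈ AtMostTwoAux.US f mp ω.1 m, u < x
    · left
      intro v hv
      by_contra hvx
      rcases h with ⟨u, hu, hux⟩
      exact hx_not ((AtMostTwoAux.US_ordConnected mp ω.1 m).out hu hv
        ⟨hux.le, not_lt.mp hvx⟩)
    · right
      push_neg at h
      intro u hu
      exact (h u hu).lt_of_ne (fun e => hx_not (e ▸ hu))
  set F : {w : ℕ → mp.ι // Adm f mp w} → Bool :=
    fun ω => decide (AtMostTwoAux.US f mp ω.1 m ⊆ Set.Ioi x) with hF
  have hinj : S.InjOn F := by
    intro ω hω ω' hω' hFe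
    have hkey : ∀ K : ℕ, ω.1 K = ω'.1 K := by
      intro K
      set n := m + K with hn
      have hmn : m ≤ n := Nat.le_add_right m K
      have hKn : K ≤ n := Nat.le_add_left K m
      have hz : (AtMostTwoAux.US f mp ω.1 n ∩ AtMostTwoAux.US f mp ω'.1 n).Nonempty := by
        by_cases hio : AtMostTwoAux.US f mp ω.1 m ⊆ Set.Ioi x
        · have hio' : AtMostTwoAux.US f mp ω'.1 m ⊆ Set.Ioi x := by
            have : F ω' = true := by rw [← hFe, hF]; simp [hio]
            simpa [hF] using this
          exact AtMostTwoAux.inter_nonempty_Ioi (AtMostTwoAux.US_ordConnected mp ω.1 n)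
            (AtMostTwoAux.US_ordConnected mp ω'.1 n) (hxcl ω hω n) (hxcl ω' hω' n)
            ((AtMostTwoAux.US_anti hmn).trans hio) ((AtMostTwoAux.US_anti hmn).trans hio')
        · have hio' : ¬ AtMostTwoAux.US f mp ω'.1 m ⊆ Set.Ioi x := by
            have : F ω' = false := by rw [← hFe, hF]; simp [hio]
            simpa [hF] using this
          have h1 : AtMostTwoAux.US f mp ω.1 m ⊆ Set.Iio x :=
            (hside ω hω).resolve_right hio
          have h2 : AtMostTwoAux.US f mp ω'.1 m ⊆ Set.Iio x :=
            (hside ω' hω').resolve_right hio'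
          exact AtMostTwoAux.inter_nonempty_Iio (AtMostTwoAux.US_ordConnected mp ω.1 n)
            (AtMostTwoAux.US_ordConnected mp ω'.1 n) (hxcl ω hω n) (hxcl ω' hω' n)
            ((AtMostTwoAux.US_anti hmn).trans h1) ((AtMostTwoAux.US_anti hmn).trans h2)
      obtain ⟨z, hz1, hz2⟩ := hz
      have e1 := (AtMostTwoAux.mem_US.mp hz1) K hKn
      have e2 := (AtMostTwoAux.mem_US.mp hz2) K hKn
      by_contra hne
      exact Set.disjoint_left.mp (mp.disj hne) e1 e2
    exact Subtype.ext (funext hkey)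
  calc S.encard = (F '' S).encard := hinj.encard_image.symm
    _ ≤ ({true, false} : Set Bool).encard := Set.encard_le_encard (by
        rintro b -
        rcases b <;> simp)
    _ = 2 := Set.encard_pair (by simp)
end

section
/- Let f be an interval map with a unique non-atomic fully supported fair measure μ, and define φ_μ(x) = μ([0,x]). Then φ_μ is a monotone increasing homeomorphism of [0,1], the pushforward of μ under φ_μ is Lebesgue measure, and the conjugated map g = φ_μ ∘ f ∘ φ_μ⁻¹ has Lebesgue measure as a fair measure. More generally, Lebesgue fair models of f correspond bijectively to non-atomic fully supported fair measures of f. -/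
open MeasureTheory
open scoped ENNReal

/-- Invariance of a measure under a map. -/
def InvariantFor (T : ℝ → ℝ) (μ : Measure ℝ) : Prop :=
  ∀ A : Set ℝ, MeasurableSet A → μ (T ⁻¹' A) = μ A

/-- Fairness of an invariant measure `μ` for a map `T` with respect to a countable partition
`P`: the measure of a set contained in an element of the refinement `𝒜` is divided equally
among the branches of `T⁻¹` defined on it. -/
def FairFor (T : ℝ → ℝ) (P : ℕ → Set ℝ) (μ : Measure ℝ) : Prop :=
  InvariantFor T μ ∧
  ∀ B : Set ℝ, MeasurableSet B →
    (∀ i, B ⊆ T '' P i ∨ B ∩ T '' P i = ∅) →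
    ∀ i, B ⊆ T '' P i →
      μ (P i ∩ T ⁻¹' B) = μ B / ({j | B ⊆ T '' P j}.encard : ℝ≥0∞)

/-- Full support on `[0,1]`. -/
def FullSupportOn (μ : Measure ℝ) : Prop :=
  ∀ U : Set ℝ, IsOpen U → (U ∩ Set.Icc 0 1).Nonempty → 0 < μ U

/-- Non-atomicity. -/
def NonAtomic (μ : Measure ℝ) : Prop := ∀ x : ℝ, μ {x} = 0

/-- A non-atomic fully supported fair probability measure for `(f, P)` carried by `[0,1]`. -/
def GoodFairMeasure (T : ℝ → ℝ) (P : ℕ → Set ℝ) (μ : Measure ℝ) : Prop :=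
  IsProbabilityMeasure μ ∧ μ (Set.Icc 0 1) = 1 ∧ FairFor T P μ ∧ NonAtomic μ ∧ FullSupportOn μ

/-!
Since `μ` has no atoms and charges every open subinterval of `[0, 1]`, its distribution function
`F x = μ [0, x]` is a continuous strictly increasing bijection of `[0, 1]`, and it pushes `μ`
forward to Lebesgue measure. Extended by the identity, `F` becomes an order isomorphism `e` of
`ℝ`. A homeomorphism of `ℝ` preserving `[0, 1]` transports fairness, non-atomicity and full
support, because it carries the partition, the preimages and the branch counts
`{j | B ⊆ T '' P j}` along with it. Applied to `e` this makes Lebesgue measure fair for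
`e ∘ f ∘ e⁻¹`; applied to the inverse of (an extension of) a Lebesgue fair model `φ'`, it pulls
Lebesgue measure back to a non-atomic fully supported fair measure of `f`.
-/

open Set ProbabilityTheory

theorem StieltjesFunction.continuousAt_of_measure_singleton (f : StieltjesFunction ℝ) {x : ℝ}
    (h : f.measure {x} = 0) : ContinuousAt f x := by
  have hleft : Function.leftLim f x = f x := by
    have hjump := f.measure_singleton x
    rw [h, eq_comm, ENNReal.ofReal_eq_zero] at hjump
    exact le_antisymm (f.mono.leftLim_le le_rfl) (by linarith)
  rw [f.mono.continuousAt_iff_leftLim_eq_rightLim, f.rightLim_eq, hleft]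

theorem ProbabilityTheory.continuous_cdf (μ : Measure ℝ) [IsProbabilityMeasure μ]
    [NullSingletonClass μ] : Continuous (cdf μ) :=
  continuous_iff_continuousAt.2 fun x =>
    (cdf μ).continuousAt_of_measure_singleton (by rw [measure_cdf]; exact measure_singleton x)

theorem ProbabilityTheory.cdf_eq_toReal_measure_Icc {μ : Measure ℝ} [IsProbabilityMeasure μ]
    (h : μ (Iio 0) = 0) (x : ℝ) : cdf μ x = (μ (Icc 0 x)).toReal := by
  rw [cdf_eq_real, measureReal_def, ← Iic_inter_Ici, measure_inter_conull (by rwa [compl_Ici])]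

theorem ProbabilityTheory.strictMonoOn_cdf {μ : Measure ℝ} [IsProbabilityMeasure μ]
    (h : FullSupportOn μ) : StrictMonoOn (cdf μ) (Icc 0 1) := by
  intro x hx y hy hxy
  obtain ⟨z, hxz, hzy⟩ := exists_between hxy
  have hpos : 0 < μ (Ioc x y) :=
    (h _ isOpen_Ioo ⟨z, ⟨hxz, hzy⟩, hx.1.trans hxz.le, hzy.le.trans hy.2⟩).trans_le
      (measure_mono Ioo_subset_Ioc_self)
  rwa [← measure_cdf μ, StieltjesFunction.measure_Ioc, ENNReal.ofReal_pos, sub_pos] at hpos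

theorem volume_restrict_Icc_Iic (u : ℝ) :
    volume.restrict (Icc (0 : ℝ) 1) (Iic u) = ENNReal.ofReal (min u 1) := by
  have hinter : Iic u ∩ Icc 0 1 = Icc 0 (min u 1) := by
    ext x
    simp only [mem_inter_iff, mem_Iic, mem_Icc, le_min_iff]
    tauto
  rw [Measure.restrict_apply measurableSet_Iic, hinter, Real.volume_Icc, sub_zero]

theorem OrderIso.map_eq_volume_restrict_Icc_of_eqOn_cdf {μ : Measure ℝ} [IsProbabilityMeasure μ]
    (e : ℝ ≃o ℝ) (he : EqOn e (cdf μ) (Icc 0 1)) (h0 : cdf μ 0 = 0) (h1 : cdf μ 1 = 1) :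
    μ.map e = volume.restrict (Icc 0 1) := by
  have : IsProbabilityMeasure (μ.map e) :=
    Measure.isProbabilityMeasure_map e.monotone.measurable.aemeasurable
  refine Measure.ext_of_Iic _ _ fun t => ?_
  obtain ⟨s, rfl⟩ := e.surjective t
  rw [Measure.map_apply e.monotone.measurable measurableSet_Iic, e.preimage_Iic,
    e.symm_apply_apply, volume_restrict_Icc_Iic, ← ofReal_cdf]
  rcases lt_or_ge s 0 with hs0 | hs0
  · have he0 : e s < 0 := (e.lt_iff_lt.2 hs0).trans_eq ((he ⟨le_rfl, zero_le_one⟩).trans h0)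
    rw [ENNReal.ofReal_of_nonpos ((min_le_left _ _).trans he0.le), ENNReal.ofReal_eq_zero]
    exact (monotone_cdf μ hs0.le).trans h0.le
  congr 1
  rcases le_or_gt s 1 with hs1 | hs1
  · rw [he ⟨hs0, hs1⟩, min_eq_left (cdf_le_one μ s)]
  · have he1 : 1 < e s := ((he ⟨zero_le_one, le_rfl⟩).trans h1).symm.trans_lt (e.lt_iff_lt.2 hs1)
    rw [min_eq_right he1.le]
    exact le_antisymm (cdf_le_one μ s) (h1 ▸ monotone_cdf μ hs1.le)

theorem StrictMonoOn.exists_orderIso_eqOn_Icc {α : Type*} [LinearOrder α] {a b : α} {F : α → α}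
    (hF : StrictMonoOn F (Icc a b)) (himg : F '' Icc a b = Icc a b) :
    ∃ e : α ≃o α, EqOn e F (Icc a b) := by
  classical
  have hmaps : MapsTo F (Icc a b) (Icc a b) := fun _ hx => himg.subset (mem_image_of_mem F hx)
  let Φ : α → α := (Icc a b).piecewise F id
  have hΦ : StrictMono Φ := by
    intro x y hxy
    by_cases hx : x ∈ Icc a b <;> by_cases hy : y ∈ Icc a b <;>
      simp only [Φ, piecewise_eq_of_mem, piecewise_eq_of_notMem, hx, hy, id, not_false_eq_true]
    · exact hF hx hy hxy
    · exact (hmaps hx).2.trans_lt (lt_of_not_ge fun h => hy ⟨hx.1.trans hxy.le, h⟩)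
    · exact (lt_of_not_ge fun h => hx ⟨h, hxy.le.trans hy.2⟩).trans_le (hmaps hy).1
    · exact hxy
  have hsurj : Function.Surjective Φ := by
    intro y
    by_cases hy : y ∈ Icc a b
    · obtain ⟨x, hx, rfl⟩ := himg.symm ▸ hy
      exact ⟨x, piecewise_eq_of_mem _ _ _ hx⟩
    · exact ⟨y, piecewise_eq_of_notMem _ _ _ hy⟩
  exact ⟨hΦ.orderIsoOfSurjective Φ hsurj, fun x hx => piecewise_eq_of_mem _ _ _ hx⟩

theorem FairFor.map_measurableEquiv {T S : ℝ → ℝ} {P : ℕ → Set ℝ} {μ : Measure ℝ} {K : Set ℝ}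
    (e : ℝ ≃ᵐ ℝ) (hK : μ Kᶜ = 0) (hPK : ∀ i, P i ⊆ K) (hconj : ∀ x ∈ K, S (e x) = e (T x))
    (h : FairFor T P μ) : FairFor S (fun i => e '' P i) (μ.map e) := by
  have himage : ∀ j, S '' (e '' P j) = e '' (T '' P j) := fun j => by
    rw [image_image, image_image]
    exact image_congr fun x hx => hconj x (hPK j hx)
  have hsub : ∀ B j, B ⊆ S '' (e '' P j) ↔ e ⁻¹' B ⊆ T '' P j := fun B j => by
    rw [himage, ← image_subset_image_iff e.injective (s := e ⁻¹' B), e.surjective.image_preimage]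
  have hdisj : ∀ B j, B ∩ S '' (e '' P j) = ∅ ↔ e ⁻¹' B ∩ T '' P j = ∅ := fun B j => by
    rw [himage, ← image_preimage_inter, image_eq_empty]
  refine ⟨fun A hA => ?_, fun B hB hcover i hBi => ?_⟩
  · have hpre : e ⁻¹' (S ⁻¹' A) ∩ K = T ⁻¹' (e ⁻¹' A) ∩ K := by
      ext x
      simp +contextual only [mem_inter_iff, mem_preimage, hconj, and_congr_left_iff, implies_true]
    rw [e.map_apply, e.map_apply, ← h.1 _ (e.measurable hA), ← measure_inter_conull hK,
      hpre, measure_inter_conull hK]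
  · have hpre : e ⁻¹' (e '' P i ∩ S ⁻¹' B) = P i ∩ T ⁻¹' (e ⁻¹' B) := by
      ext x
      simp +contextual only [mem_inter_iff, mem_preimage, e.injective.mem_set_image,
        hconj x (hPK i _), and_congr_right_iff, implies_true]
    have hcard : {j | B ⊆ S '' (e '' P j)} = {j | e ⁻¹' B ⊆ T '' P j} := by
      simp only [hsub]
    rw [e.map_apply, e.map_apply, hpre, hcard]
    exact h.2 _ (e.measurable hB) (fun j => (hcover j).imp (hsub B j).1 (hdisj B j).1) i
      ((hsub B i).1 hBi)

theorem GoodFairMeasure.measure_compl_Icc {T : ℝ → ℝ} {P : ℕ → Set ℝ} {μ : Measure ℝ}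
    (h : GoodFairMeasure T P μ) : μ (Icc 0 1)ᶜ = 0 :=
  haveI := h.1
  (prob_compl_eq_zero_iff measurableSet_Icc).2 h.2.1

theorem GoodFairMeasure.map_homeomorph {T S : ℝ → ℝ} {P : ℕ → Set ℝ} {μ : Measure ℝ}
    (e : ℝ ≃ₜ ℝ) (he : e '' Icc 0 1 = Icc 0 1) (hP : ∀ i, P i ⊆ Icc 0 1)
    (hconj : ∀ x ∈ Icc (0 : ℝ) 1, S (e x) = e (T x)) (h : GoodFairMeasure T P μ) :
    GoodFairMeasure S (fun i => e '' P i) (μ.map e) := by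
  have hK := h.measure_compl_Icc
  obtain ⟨hprob, hI, hfair, hna, hfull⟩ := h
  have hmap : ∀ s, μ.map e s = μ (e ⁻¹' s) := e.toMeasurableEquiv.map_apply
  have hpreI : e ⁻¹' Icc 0 1 = Icc 0 1 := by nth_rw 1 [← he]; exact e.preimage_image _
  refine ⟨Measure.isProbabilityMeasure_map e.measurable.aemeasurable, by rw [hmap, hpreI, hI],
    hfair.map_measurableEquiv e.toMeasurableEquiv hK hP hconj, fun x => ?_,
    fun U hU ⟨y, hyU, hyI⟩ => ?_⟩
  · rw [hmap, ← e.image_symm, image_singleton, hna]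
  · rw [hmap]
    exact hfull _ (hU.preimage e.continuous)
      ⟨e.symm y, by simpa using hyU, hpreI ▸ by simpa using hyI⟩

theorem fullSupportOn_volume_restrict_Icc : FullSupportOn (volume.restrict (Icc (0 : ℝ) 1)) := by
  rintro U hU ⟨x, hxU, hxI⟩
  rw [← closure_Ioo zero_ne_one] at hxI
  have hne : (U ∩ Ioo 0 1).Nonempty := mem_closure_iff.1 hxI U hU hxU
  rw [Measure.restrict_apply hU.measurableSet]
  exact ((hU.inter isOpen_Ioo).measure_pos volume hne).trans_le
    (measure_mono (inter_subset_inter_right U Ioo_subset_Icc_self))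

theorem goodFairMeasure_volume_restrict_Icc {T : ℝ → ℝ} {P : ℕ → Set ℝ}
    (h : FairFor T P (volume.restrict (Icc 0 1))) :
    GoodFairMeasure T P (volume.restrict (Icc 0 1)) :=
  ⟨⟨by simp⟩, by simp, h, fun x => by simp, fullSupportOn_volume_restrict_Icc⟩

theorem exists_goodFairMeasure_map_eq_volume {T S φ : ℝ → ℝ} {P : ℕ → Set ℝ}
    (hT : MapsTo T (Icc 0 1) (Icc 0 1)) (hP : ∀ i, P i ⊆ Icc 0 1)
    (hφ : StrictMonoOn φ (Icc 0 1)) (hφI : φ '' Icc 0 1 = Icc 0 1)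
    (hconj : ∀ x ∈ Icc (0 : ℝ) 1, S (φ x) = φ (T x))
    (hfair : FairFor S (fun i => φ '' P i) (volume.restrict (Icc 0 1))) :
    ∃ μ : Measure ℝ, GoodFairMeasure T P μ ∧ μ.map φ = volume.restrict (Icc 0 1) := by
  obtain ⟨e, he⟩ := hφ.exists_orderIso_eqOn_Icc hφI
  have heI : e '' Icc 0 1 = Icc 0 1 := he.image_eq.trans hφI
  have hsymmI : e.symm '' Icc 0 1 = Icc 0 1 := by
    conv_lhs => rw [← heI]
    exact e.symm_image_image _
  have hconj' : ∀ y ∈ Icc (0 : ℝ) 1, T (e.symm y) = e.symm (S y) := by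
    rw [← heI]
    rintro _ ⟨x, hx, rfl⟩
    rw [e.symm_apply_apply, he hx, hconj x hx, ← he (hT hx), e.symm_apply_apply]
  have hPe : ∀ i, e.symm '' (φ '' P i) = P i := fun i => by
    rw [← (he.mono (hP i)).image_eq, e.symm_image_image]
  have hgood := (goodFairMeasure_volume_restrict_Icc hfair).map_homeomorph e.symm.toHomeomorph
    hsymmI (fun i => (image_mono (hP i)).trans hφI.subset) hconj'
  simp only [OrderIso.coe_toHomeomorph, hPe] at hgood
  refine ⟨_, hgood, ?_⟩
  rw [Measure.map_congr (Filter.eventually_of_mem (mem_ae_iff.2 hgood.measure_compl_Icc)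
    he.symm), Measure.map_map e.monotone.measurable e.symm.monotone.measurable]
  simp [Function.comp_def]

theorem lebesgue_fair_model_general
    (f : ℝ → ℝ) (hmaps : Set.MapsTo f (Set.Icc 0 1) (Set.Icc 0 1))
    (Xp : ℕ → Set ℝ)
    (hXsub : ∀ i, Xp i ⊆ Set.Icc 0 1)
    (μ : Measure ℝ) (hμ : GoodFairMeasure f Xp μ) :
    (StrictMonoOn (fun x => (μ (Set.Icc 0 x)).toReal) (Set.Icc 0 1) ∧
      ContinuousOn (fun x => (μ (Set.Icc 0 x)).toReal) (Set.Icc 0 1) ∧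
      (fun x => (μ (Set.Icc 0 x)).toReal) '' Set.Icc 0 1 = Set.Icc 0 1) ∧
    Measure.map (fun x => (μ (Set.Icc 0 x)).toReal) μ = volume.restrict (Set.Icc 0 1) ∧
    (∃ g : ℝ → ℝ, Set.MapsTo g (Set.Icc 0 1) (Set.Icc 0 1) ∧
      (∀ x ∈ Set.Icc (0 : ℝ) 1, g ((μ (Set.Icc 0 x)).toReal) = (μ (Set.Icc 0 (f x))).toReal) ∧
      FairFor g (fun i => (fun x => (μ (Set.Icc 0 x)).toReal) '' Xp i)
        (volume.restrict (Set.Icc 0 1))) ∧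
    (∀ φ' g' : ℝ → ℝ,
      StrictMonoOn φ' (Set.Icc 0 1) → ContinuousOn φ' (Set.Icc 0 1) →
      φ' '' Set.Icc 0 1 = Set.Icc 0 1 →
      (∀ x ∈ Set.Icc (0 : ℝ) 1, g' (φ' x) = φ' (f x)) →
      FairFor g' (fun i => φ' '' Xp i) (volume.restrict (Set.Icc 0 1)) →
      ∃ μ' : Measure ℝ, GoodFairMeasure f Xp μ' ∧
        Measure.map φ' μ' = volume.restrict (Set.Icc 0 1)) := by
  have hK := hμ.measure_compl_Icc
  obtain ⟨_, hI, -, hna, hfull⟩ := id hμ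
  have : NullSingletonClass μ := ⟨hna⟩
  have hneg : μ (Iio 0) = 0 :=
    measure_mono_null (fun x (hx : x < 0) (hxI : x ∈ Icc 0 1) => hx.not_ge hxI.1) hK
  have hcdf (x : ℝ) : (μ (Icc 0 x)).toReal = cdf μ x := (cdf_eq_toReal_measure_Icc hneg x).symm
  simp only [hcdf]
  have h0 : cdf μ 0 = 0 := by rw [← hcdf, Icc_self, hna, ENNReal.toReal_zero]
  have h1 : cdf μ 1 = 1 := by rw [← hcdf, hI, ENNReal.toReal_one]
  have hsm := strictMonoOn_cdf hfull
  have himg : cdf μ '' Icc 0 1 = Icc 0 1 := by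
    rw [(continuous_cdf μ).continuousOn.image_Icc_of_monotoneOn zero_le_one
      ((monotone_cdf μ).monotoneOn _), h0, h1]
  obtain ⟨e, he⟩ := hsm.exists_orderIso_eqOn_Icc himg
  have hmap := e.map_eq_volume_restrict_Icc_of_eqOn_cdf he h0 h1
  have heI : e '' Icc 0 1 = Icc 0 1 := he.image_eq.trans himg
  obtain ⟨-, -, hfair, -⟩ := hμ.map_homeomorph e.toHomeomorph heI hXsub (S := e ∘ f ∘ e.symm)
    fun x _ => by simp
  refine ⟨⟨hsm, (continuous_cdf μ).continuousOn, himg⟩, ?_, ⟨e ∘ f ∘ e.symm, ?_, ?_, ?_⟩,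
    fun φ' g' hφ' _ hφ'I hconj' hfair' =>
      exists_goodFairMeasure_map_eq_volume hmaps hXsub hφ' hφ'I hconj' hfair'⟩
  · rw [Measure.map_congr (Filter.eventually_of_mem (mem_ae_iff.2 hK) he.symm), hmap]
  · rw [← heI]
    rintro _ ⟨x, hx, rfl⟩
    simpa using mem_image_of_mem e (hmaps hx)
  · intro x hx
    simp [← he hx, he (hmaps hx)]
  · have himages : (fun i => cdf μ '' Xp i) = fun i => e '' Xp i :=
      funext fun i => ((he.mono (hXsub i)).image_eq).symm
    rwa [himages, ← hmap]

/-- Let `f` be an interval map with a unique non-atomic fully supported fair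
measure `μ`, and define `φ_μ(x) = μ([0,x])`. Then `φ_μ` is a monotone increasing
homeomorphism of `[0,1]`, the pushforward of `μ` under `φ_μ` is Lebesgue measure on `[0,1]`,
and the conjugated map `g = φ_μ ∘ f ∘ φ_μ⁻¹` has Lebesgue measure as a fair measure (with
respect to the transported partition). More generally, Lebesgue fair models of `f`
correspond bijectively to non-atomic fully supported fair measures of `f`: every Lebesgue
fair model arises from such a measure. -/
theorem lebesgue_fair_model
    (f : ℝ → ℝ) (hmaps : Set.MapsTo f (Set.Icc 0 1) (Set.Icc 0 1))
    (Xp : ℕ → Set ℝ)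
    (hXsub : ∀ i, Xp i ⊆ Set.Icc 0 1)
    (hXm : ∀ i, MeasurableSet (Xp i))
    (hXcover : (⋃ i, Xp i) = Set.Icc 0 1)
    (hXdisj : Pairwise (Function.onFun Disjoint Xp))
    (hXinj : ∀ i, Set.InjOn f (Xp i))
    (hXimg : ∀ i, MeasurableSet (f '' Xp i))
    (μ : Measure ℝ) (hμ : GoodFairMeasure f Xp μ)
    (huniq : ∀ μ' : Measure ℝ, GoodFairMeasure f Xp μ' → μ' = μ) :
    (StrictMonoOn (fun x => (μ (Set.Icc 0 x)).toReal) (Set.Icc 0 1) ∧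
      ContinuousOn (fun x => (μ (Set.Icc 0 x)).toReal) (Set.Icc 0 1) ∧
      (fun x => (μ (Set.Icc 0 x)).toReal) '' Set.Icc 0 1 = Set.Icc 0 1) ∧
    Measure.map (fun x => (μ (Set.Icc 0 x)).toReal) μ = volume.restrict (Set.Icc 0 1) ∧
    (∃ g : ℝ → ℝ, Set.MapsTo g (Set.Icc 0 1) (Set.Icc 0 1) ∧
      (∀ x ∈ Set.Icc (0 : ℝ) 1, g ((μ (Set.Icc 0 x)).toReal) = (μ (Set.Icc 0 (f x))).toReal) ∧
      FairFor g (fun i => (fun x => (μ (Set.Icc 0 x)).toReal) '' Xp i)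
        (volume.restrict (Set.Icc 0 1))) ∧
    (∀ φ' g' : ℝ → ℝ,
      StrictMonoOn φ' (Set.Icc 0 1) → ContinuousOn φ' (Set.Icc 0 1) →
      φ' '' Set.Icc 0 1 = Set.Icc 0 1 →
      (∀ x ∈ Set.Icc (0 : ℝ) 1, g' (φ' x) = φ' (f x)) →
      FairFor g' (fun i => φ' '' Xp i) (volume.restrict (Set.Icc 0 1)) →
      ∃ μ' : Measure ℝ, GoodFairMeasure f Xp μ' ∧
        Measure.map φ' μ' = volume.restrict (Set.Icc 0 1)) :=
  lebesgue_fair_model_general f hmaps Xp hXsub μ hμ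
end

section
/- For the Bruin–Todd countably piecewise linear map f_λ with branches of the form f_λ(x) = (x − λⁿ)/(λⁿ⁻¹(1−λⁿ⁻¹/λⁿ⁻¹)) on intervals i_n = (λⁿ, λⁿ⁻¹), the associated stochastic matrix Q (with q_{ji} = m_{ij}/c_j, where m_{ij} = 1 iff i ≤ j+1, and c_j = j+1) has the stationary probability vector π_n = e⁻¹/(n−1)! (n ≥ 1), that is, Σ_j π_j q_{jn} = π_n and Σ π_n = 1. -/
private lemma bt_exp1 : HasSum (fun k : ℕ => (1 : ℝ) / k.factorial) (Real.exp 1) := by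
  have := NormedSpace.expSeries_div_hasSum_exp (1 : ℝ)
  simpa [Real.exp_eq_exp_ℝ, one_pow] using this

private lemma bt_telescope :
    HasSum (fun k : ℕ => (1 : ℝ) / (k+1).factorial - 1 / (k+2).factorial)
    (1 / Nat.factorial 1) := by
  have hnn : ∀ k : ℕ, (0:ℝ) ≤ 1 / (k+1).factorial - 1 / (k+2).factorial := by
    intro k
    have : ((k+1).factorial : ℝ) ≤ (k+2).factorial := by
      exact_mod_cast Nat.factorial_le (by omega)
    have h1 : (0:ℝ) < (k+1).factorial := by positivity
    have := one_div_le_one_div_of_le h1 this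
    linarith
  rw [hasSum_iff_tendsto_nat_of_nonneg hnn]
  have hsum : ∀ n : ℕ, ∑ i ∈ Finset.range n,
      ((1:ℝ) / (i+1).factorial - 1 / (i+2).factorial)
      = 1 / Nat.factorial 1 - 1 / (n+1).factorial := by
    intro n
    have := Finset.sum_range_sub' (fun i => (1:ℝ) / (i+1).factorial) n
    simpa using this
  simp only [hsum]
  have : Filter.Tendsto (fun n : ℕ => (1:ℝ) / (n+1).factorial) Filter.atTop (nhds 0) := by
    have h := FloorSemiring.tendsto_pow_div_factorial_atTop (K := ℝ) 1
    have h2 := h.comp (Filter.tendsto_add_atTop_nat 1)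
    simpa [Function.comp_def, one_pow] using h2
  simpa using (tendsto_const_nhds.sub this)

private lemma bt_tail (m : ℕ) :
    HasSum (fun k : ℕ => if m ≤ k then (1:ℝ) / (k+1).factorial - 1 / (k+2).factorial else 0)
    (1 / (m+1).factorial) := by
  set f : ℕ → ℝ := fun k => (1:ℝ) / (k+1).factorial - 1 / (k+2).factorial with hf
  have hpart : ∑ i ∈ Finset.range m, f i = 1 / Nat.factorial 1 - 1 / (m+1).factorial := by
    have := Finset.sum_range_sub' (fun i => (1:ℝ) / (i+1).factorial) m
    simpa [hf] using this
  have hshift : HasSum (fun k : ℕ => f (k + m)) (1 / (m+1).factorial) := by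
    rw [hasSum_nat_add_iff m, hpart]
    have : (1:ℝ) / (m+1).factorial + (1 / Nat.factorial 1 - 1 / (m+1).factorial)
        = 1 / Nat.factorial 1 := by ring
    rw [this]
    exact bt_telescope
  have hinj : Function.Injective (fun k : ℕ => k + m) := add_left_injective m
  have hf0 : ∀ x ∉ Set.range (fun k : ℕ => k + m),
      (if m ≤ x then f x else 0) = 0 := by
    intro x hx
    simp only [Set.mem_range] at hx
    have : ¬ m ≤ x := fun h => hx ⟨x - m, by omega⟩
    simp [this]
  rw [← Function.Injective.hasSum_iff hinj hf0]
  convert hshift using 2 with k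
  simp [Function.comp, Nat.le_add_left]

/-- The stochastic matrix `Q` of the Bruin–Todd map: `q j i = 1/(j+1)` for `i ≤ j+1`,
`0` otherwise (indices in `ℕ₊ = {1, 2, 3, …}`); it comes from the transition matrix
`m i j = 1` iff `i ≤ j + 1`, whose column sums are `c j = j + 1`. -/
noncomputable def btQ : ℕ+ → ℕ+ → ℝ :=
  fun j i => if (i : ℕ) ≤ (j : ℕ) + 1 then 1 / ((j : ℕ) + 1 : ℝ) else 0

/-- The candidate stationary vector `π n = e⁻¹ / (n-1)!`. -/
noncomputable def btPi : ℕ+ → ℝ :=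
  fun n => Real.exp (-1) / (Nat.factorial ((n : ℕ) - 1) : ℝ)

/-- For the Bruin–Todd map, the stochastic matrix `Q` (with
`q j i = m i j / c j`, `m i j = 1` iff `i ≤ j + 1`, `c j = j + 1`) has the stationary
probability vector `π n = e⁻¹/(n-1)!`: `π` is a probability vector and `π Q = π`. -/
theorem bruin_todd_stationary_vector :
    HasSum btPi 1 ∧ ∀ n : ℕ+, HasSum (fun j => btPi j * btQ j n) (btPi n) := by
  constructor
  · rw [← Equiv.pnatEquivNat.symm.hasSum_iff]
    have h := bt_exp1.mul_left (Real.exp (-1))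
    have he : Real.exp (-1) * Real.exp 1 = 1 := by
      rw [← Real.exp_add]; norm_num
    rw [he] at h
    convert h using 2 with k
    · rfl
    simp [btPi, Function.comp_def, Equiv.pnatEquivNat_symm_apply, Nat.succPNat_coe,
      div_eq_mul_inv, one_div]
  · intro n
    rw [← Equiv.pnatEquivNat.symm.hasSum_iff]
    set m : ℕ := (n : ℕ) - 2 with hm
    have h := (bt_tail m).mul_left (Real.exp (-1))
    have hn1 : 1 ≤ (n : ℕ) := n.one_le
    have hfac : (Nat.factorial ((n : ℕ) - 1) : ℝ) = Nat.factorial (m + 1) := by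
      rcases Nat.lt_or_ge (n : ℕ) 2 with h2 | h2
      · have : (n : ℕ) = 1 := by omega
        simp [hm, this]
      · have : (n : ℕ) - 1 = m + 1 := by omega
        rw [this]
    have htarget : btPi n = Real.exp (-1) * (1 / (m+1).factorial) := by
      simp [btPi, hfac, div_eq_mul_inv, one_div]
    rw [htarget]
    convert h using 2 with k
    · rfl
    simp only [Function.comp_def, btPi, btQ, Equiv.pnatEquivNat_symm_apply, Nat.succPNat_coe,
      Nat.succ_eq_add_one]
    have hiff : ((n : ℕ) ≤ k + 1 + 1) ↔ m ≤ k := by omega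
    have hksub : k + 1 - 1 = k := by omega
    rw [hksub]
    by_cases hc : m ≤ k
    · simp only [hiff, hc, ↓reduceIte]
      have hk1 : ((k+1).factorial : ℝ) = (k+1) * k.factorial := by
        rw [Nat.factorial_succ]; push_cast; ring
      have hk2 : ((k+2).factorial : ℝ) = (k+2) * ((k+1) * k.factorial) := by
        rw [show k + 2 = (k+1) + 1 from rfl, Nat.factorial_succ, Nat.factorial_succ]
        push_cast; ring
      have hkf : (k.factorial : ℝ) ≠ 0 := by positivity
      rw [hk1, hk2]
      field_simp
      push_cast; ring
    · simp only [hiff, hc, ↓reduceIte, mul_zero]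
end

section
/- Let ([0,1], f) be a cut-and-paste model for a tame graph system (G, g). Then (G,g) and ([0,1],f) are isomorphic modulo countable invariant sets: with N₁ = ∪_{n≥0} g⁻ⁿ(C₁) and N₂ = ∪_{n≥0} f⁻ⁿ(C₂) (C₁, C₂ the complements of the unions of open partition-arc interiors and their images), the restricted map ψ : G∖N₁ → [0,1]∖N₂ is a well-defined bimeasurable bijection conjugating g to f. -/
open MeasureTheory

/-- The union of the interiors of the partition arcs. -/
def arcUnion {G : Type*} {ι : Type*} (arcInt : ι → Set G) : Set G :=
  ⋃ i, arcInt i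

/-- `N₁ = ⋃ₙ g⁻ⁿ(C₁)`, where `C₁` is the complement of the union of arc interiors. -/
def badSetG {G : Type*} {ι : Type*} (g : G → G) (arcInt : ι → Set G) : Set G :=
  ⋃ n : ℕ, g^[n] ⁻¹' (Set.univ \ arcUnion arcInt)

/-- `N₂ = [0,1] ∩ ⋃ₙ f⁻ⁿ(C₂)`, where `C₂ = [0,1] ∖ ψ(⋃ i°)`. -/
def badSetI {G : Type*} {ι : Type*} (f : ℝ → ℝ) (ψ : G → ℝ) (arcInt : ι → Set G) : Set ℝ :=
  Set.Icc 0 1 ∩ ⋃ n : ℕ, f^[n] ⁻¹' (Set.Icc 0 1 \ ψ '' arcUnion arcInt)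

private lemma cp_countable_preimage {α : Type*} {h : α → α}
    (hc : ∀ y : α, (h ⁻¹' {y}).Countable) {S : Set α} (hS : S.Countable) :
    (h ⁻¹' S).Countable := by
  have : h ⁻¹' S = ⋃ y ∈ S, h ⁻¹' {y} := by
    ext x; simp
  rw [this]
  exact hS.biUnion fun y _ => hc y

private lemma cp_countable_preimage_iterate {α : Type*} {h : α → α}
    (hc : ∀ y : α, (h ⁻¹' {y}).Countable) {S : Set α} (hS : S.Countable) :
    ∀ n : ℕ, (h^[n] ⁻¹' S).Countable := by
  intro n
  induction n with
  | zero => simpa using hS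
  | succ n ih =>
    have : h^[n + 1] ⁻¹' S = h ⁻¹' (h^[n] ⁻¹' S) := by
      ext x; simp [Function.iterate_succ_apply]
    rw [this]
    exact cp_countable_preimage hc ih

/-- Let `([0,1], f)` be a cut-and-paste model for a tame graph system `(G, g)`.
Then `(G, g)` and `([0,1], f)` are isomorphic modulo countable invariant sets: with
`N₁ = ⋃ₙ g⁻ⁿ(C₁)` and `N₂ = ⋃ₙ f⁻ⁿ(C₂)` (`C₁`, `C₂` the complements of the union of open
partition-arc interiors and of its `ψ`-image), these sets are countable and totally
invariant, and the restriction of `ψ` is a bimeasurable bijection from `G ∖ N₁` onto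
`[0,1] ∖ N₂` conjugating `g` to `f`. -/
theorem cut_and_paste_isomorphism
    {G : Type*} [MetricSpace G] [CompactSpace G] [ConnectedSpace G]
    [MeasurableSpace G] [BorelSpace G]
    (g : G → G) (hg : Continuous g)
    {ι : Type*} [Countable ι]
    (arcInt : ι → Set G)
    (hopen : ∀ i, IsOpen (arcInt i))
    (hdisj : Pairwise fun i j => Disjoint (arcInt i) (arcInt j))
    (hC₁cnt : (Set.univ \ arcUnion arcInt).Countable)
    (hC₁fwd : g '' (Set.univ \ arcUnion arcInt) ⊆ Set.univ \ arcUnion arcInt)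
    (hgcnt : ∀ x : G, (g ⁻¹' {x}).Countable)
    (ψ : G → ℝ)
    (hψsub : ψ '' arcUnion arcInt ⊆ Set.Icc 0 1)
    (hψcocnt : (Set.Icc 0 1 \ ψ '' arcUnion arcInt).Countable)
    (hψinj : Set.InjOn ψ (arcUnion arcInt))
    (hψcont : ∀ i, ContinuousOn ψ (arcInt i))
    (hψopen : ∀ i, ∀ V : Set G, IsOpen V →
      ∃ W : Set ℝ, IsOpen W ∧ ψ '' (V ∩ arcInt i) = W ∩ ψ '' arcInt i)
    (f : ℝ → ℝ) (hfmaps : Set.MapsTo f (Set.Icc 0 1) (Set.Icc 0 1))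
    (hfcnt : ∀ y : ℝ, (f ⁻¹' {y}).Countable)
    (hf₁ : ∀ x ∈ arcUnion arcInt, g x ∈ arcUnion arcInt → f (ψ x) = ψ (g x))
    (hf₂ : ∀ y ∈ Set.Icc (0 : ℝ) 1,
      (∀ x ∈ arcUnion arcInt, ψ x = y → g x ∉ arcUnion arcInt) →
      f y ∉ ψ '' arcUnion arcInt) :
    (badSetG g arcInt).Countable ∧
    g ⁻¹' badSetG g arcInt = badSetG g arcInt ∧
    (badSetI f ψ arcInt).Countable ∧
    f ⁻¹' badSetI f ψ arcInt ∩ Set.Icc 0 1 = badSetI f ψ arcInt ∧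
    Set.BijOn ψ (Set.univ \ badSetG g arcInt) (Set.Icc 0 1 \ badSetI f ψ arcInt) ∧
    (∀ x ∉ badSetG g arcInt, ψ (g x) = f (ψ x)) ∧
    (∀ B : Set ℝ, MeasurableSet B →
      MeasurableSet ((Set.univ \ badSetG g arcInt) ∩ ψ ⁻¹' B)) ∧
    (∀ A : Set G, MeasurableSet A →
      MeasurableSet (ψ '' (A \ badSetG g arcInt))) := by
    classical
  set U := arcUnion arcInt with hUdef
  -- membership characterizations
  have hmemN₁ : ∀ x : G, x ∈ badSetG g arcInt ↔ ∃ n : ℕ, g^[n] x ∉ U := by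
    intro x
    simp [badSetG, Set.mem_iUnion, Set.mem_diff, hUdef]
  have hnotN₁ : ∀ x : G, x ∉ badSetG g arcInt ↔ ∀ n : ℕ, g^[n] x ∈ U := by
    intro x
    rw [hmemN₁]; push_neg; rfl
  have hmemN₂ : ∀ y : ℝ, y ∈ badSetI f ψ arcInt ↔
      y ∈ Set.Icc (0 : ℝ) 1 ∧ ∃ n : ℕ, f^[n] y ∈ Set.Icc (0 : ℝ) 1 ∧ f^[n] y ∉ ψ '' U := by
    intro y
    simp [badSetI, Set.mem_iUnion, Set.mem_diff, hUdef]
  have hficc : ∀ y ∈ Set.Icc (0 : ℝ) 1, ∀ n : ℕ, f^[n] y ∈ Set.Icc (0 : ℝ) 1 :=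
    fun y hy n => hfmaps.iterate n hy
  -- conjugacy along good orbits
  have hconj : ∀ x : G, (∀ k : ℕ, g^[k] x ∈ U) → ∀ n : ℕ, f^[n] (ψ x) = ψ (g^[n] x) := by
    intro x hx n
    induction n with
    | zero => rfl
    | succ n ih =>
      rw [Function.iterate_succ_apply', ih, Function.iterate_succ_apply']
      exact hf₁ _ (hx n) (by have h := hx (n + 1); rwa [Function.iterate_succ_apply'] at h)
  -- Conjunct 1 : N₁ countable
  have c1 : (badSetG g arcInt).Countable :=
    Set.countable_iUnion fun n => cp_countable_preimage_iterate hgcnt hC₁cnt n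
  -- Conjunct 2 : total invariance of N₁
  have c2 : g ⁻¹' badSetG g arcInt = badSetG g arcInt := by
    ext x
    simp only [Set.mem_preimage, hmemN₁]
    constructor
    · rintro ⟨n, hn⟩
      exact ⟨n + 1, by rwa [Function.iterate_succ_apply]⟩
    · rintro ⟨n, hn⟩
      cases n with
      | zero =>
        refine ⟨0, ?_⟩
        simp only [Function.iterate_zero, id] at hn ⊢
        exact (hC₁fwd ⟨x, ⟨trivial, hn⟩, rfl⟩).2
      | succ n =>
        exact ⟨n, by rwa [Function.iterate_succ_apply] at hn⟩
  -- Conjunct 3 : N₂ countable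
  have c3 : (badSetI f ψ arcInt).Countable := by
    have : (⋃ n : ℕ, f^[n] ⁻¹' (Set.Icc 0 1 \ ψ '' arcUnion arcInt)).Countable :=
      Set.countable_iUnion fun n => cp_countable_preimage_iterate hfcnt hψcocnt n
    exact this.mono Set.inter_subset_right
  -- Conjunct 4 : total invariance of N₂
  have c4 : f ⁻¹' badSetI f ψ arcInt ∩ Set.Icc 0 1 = badSetI f ψ arcInt := by
    ext y
    simp only [Set.mem_inter_iff, Set.mem_preimage, hmemN₂]
    constructor
    · rintro ⟨⟨_, n, hn1, hn2⟩, hy⟩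
      exact ⟨hy, n + 1, by rwa [Function.iterate_succ_apply], by rwa [Function.iterate_succ_apply]⟩
    · rintro ⟨hy, n, hn1, hn2⟩
      refine ⟨⟨hfmaps hy, ?_⟩, hy⟩
      cases n with
      | zero =>
        simp only [Function.iterate_zero, id] at hn1 hn2
        refine ⟨0, ?_, ?_⟩
        · simpa using hfmaps hy
        · simp only [Function.iterate_zero, id]
          exact hf₂ y hy fun x hxU hψx => absurd ⟨x, hxU, hψx⟩ hn2
      | succ n =>
        exact ⟨n, by rwa [Function.iterate_succ_apply] at hn1,
          by rwa [Function.iterate_succ_apply] at hn2⟩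
  -- Conjunct 5 : BijOn
  have hgoodU : ∀ x : G, x ∉ badSetG g arcInt → x ∈ U := by
    intro x hx
    have := (hnotN₁ x).1 hx 0
    simpa using this
  have c5 : Set.BijOn ψ (Set.univ \ badSetG g arcInt) (Set.Icc 0 1 \ badSetI f ψ arcInt) := by
    refine ⟨?_, ?_, ?_⟩
    · -- MapsTo
      rintro x ⟨-, hx⟩
      have hall : ∀ n : ℕ, g^[n] x ∈ U := (hnotN₁ x).1 hx
      have hxU : x ∈ U := by simpa using hall 0
      have hψx : ψ x ∈ Set.Icc (0 : ℝ) 1 := hψsub ⟨x, hxU, rfl⟩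
      refine ⟨hψx, fun hmem => ?_⟩
      obtain ⟨-, n, -, hn2⟩ := (hmemN₂ (ψ x)).1 hmem
      exact hn2 (hconj x hall n ▸ ⟨g^[n] x, hall n, rfl⟩)
    · -- InjOn
      rintro x ⟨-, hx⟩ y ⟨-, hy⟩ h
      exact hψinj (hgoodU x hx) (hgoodU y hy) h
    · -- SurjOn
      rintro y ⟨hyIcc, hyN⟩
      have hall2 : ∀ n : ℕ, f^[n] y ∈ ψ '' U := by
        intro n
        by_contra h
        exact hyN ((hmemN₂ y).2 ⟨hyIcc, n, hficc y hyIcc n, h⟩)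
      obtain ⟨x, hxU, hψx⟩ := by simpa using hall2 0
      have key : ∀ n : ℕ, g^[n] x ∈ U ∧ f^[n] y = ψ (g^[n] x) := by
        intro n
        induction n with
        | zero => exact ⟨by simpa using hxU, by simpa using hψx.symm⟩
        | succ n ih =>
          obtain ⟨h1, h2⟩ := ih
          have hnext : g^[n + 1] x ∈ U := by
            by_contra hbad
            have hfn : f^[n] y ∈ Set.Icc (0 : ℝ) 1 := hficc y hyIcc n
            have := hf₂ (f^[n] y) hfn (by
              intro x' hx'U hψx'
              have : x' = g^[n] x := hψinj hx'U h1 (by rw [hψx', h2])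
              rw [this]
              rwa [Function.iterate_succ_apply'] at hbad)
            have h3 := hall2 (n + 1)
            rw [Function.iterate_succ_apply'] at h3
            exact this h3
          refine ⟨hnext, ?_⟩
          rw [Function.iterate_succ_apply', h2, Function.iterate_succ_apply']
          exact hf₁ _ h1 (by have h := hnext; rwa [Function.iterate_succ_apply'] at h)
      exact ⟨x, ⟨trivial, (hnotN₁ x).2 fun n => (key n).1⟩, hψx⟩
  -- Conjunct 6 : conjugacy
  have c6 : ∀ x ∉ badSetG g arcInt, ψ (g x) = f (ψ x) := by
    intro x hx
    have hall : ∀ n : ℕ, g^[n] x ∈ U := (hnotN₁ x).1 hx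
    exact (hf₁ x (by simpa using hall 0) (by simpa [Function.iterate_one] using hall 1)).symm
  -- measurability preliminaries
  have hN₁meas : MeasurableSet (badSetG g arcInt) := c1.measurableSet
  have hPolish : PolishSpace G := inferInstance
  have hemb : ∀ i : ι, MeasurableEmbedding ((arcInt i).restrict ψ) := by
    intro i
    exact ContinuousOn.measurableEmbedding (hopen i).measurableSet (hψcont i)
      (hψinj.mono (Set.subset_iUnion arcInt i))
  -- Conjunct 7 : ψ is measurable on the good set
  have c7 : ∀ B : Set ℝ, MeasurableSet B →
      MeasurableSet ((Set.univ \ badSetG g arcInt) ∩ ψ ⁻¹' B) := by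
    intro B hB
    have heq : (Set.univ \ badSetG g arcInt) ∩ ψ ⁻¹' B =
        (Set.univ \ badSetG g arcInt) ∩ ⋃ i : ι, (arcInt i ∩ ψ ⁻¹' B) := by
      ext x
      simp only [Set.mem_inter_iff, Set.mem_iUnion, Set.mem_preimage, Set.mem_diff,
        Set.mem_univ, true_and]
      constructor
      · rintro ⟨hx, hxB⟩
        obtain ⟨i, hi⟩ := Set.mem_iUnion.1 (hgoodU x hx)
        exact ⟨hx, i, hi, hxB⟩
      · rintro ⟨hx, i, _, hxB⟩
        exact ⟨hx, hxB⟩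
    rw [heq]
    refine MeasurableSet.inter (MeasurableSet.univ.diff hN₁meas) (MeasurableSet.iUnion fun i => ?_)
    have : arcInt i ∩ ψ ⁻¹' B =
        (Subtype.val : arcInt i → G) '' (((arcInt i).restrict ψ) ⁻¹' B) := by
      ext x
      constructor
      · rintro ⟨hxi, hxB⟩
        exact ⟨⟨x, hxi⟩, hxB, rfl⟩
      · rintro ⟨⟨x', hx'⟩, hB', rfl⟩
        exact ⟨hx', hB'⟩
    rw [this]
    exact (MeasurableEmbedding.subtype_coe (hopen i).measurableSet).measurableSet_image.2
      ((hemb i).measurable hB)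
  -- Conjunct 8 : ψ maps measurable sets to measurable sets
  have c8 : ∀ A : Set G, MeasurableSet A →
      MeasurableSet (ψ '' (A \ badSetG g arcInt)) := by
    intro A hA
    have heq : ψ '' (A \ badSetG g arcInt) =
        ⋃ i : ι, ((arcInt i).restrict ψ) ''
          ((Subtype.val : arcInt i → G) ⁻¹' (A \ badSetG g arcInt)) := by
      ext y
      simp only [Set.mem_image, Set.mem_iUnion, Set.mem_preimage]
      constructor
      · rintro ⟨x, hx, rfl⟩
        obtain ⟨i, hi⟩ := Set.mem_iUnion.1 (hgoodU x hx.2)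
        exact ⟨i, ⟨x, hi⟩, hx, rfl⟩
      · rintro ⟨i, ⟨x, hxi⟩, hx, rfl⟩
        exact ⟨x, hx, rfl⟩
    rw [heq]
    refine MeasurableSet.iUnion fun i => ?_
    exact (hemb i).measurableSet_image.2
      (measurable_subtype_coe (hA.diff hN₁meas))
  exact ⟨c1, c2, c3, c4, c5, c6, c7, c8⟩
end
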